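/- arXiv:1203.2942 — 12 statements merged into one kernel-verified Lean document; each statement's English description precedes it below -/
import Mathlib

section
/- Let u ∈ C^2([a,b]) satisfy -u'' = λ - κ cos(α) u + κ sin(α)(x - b) on (a,b) with u(a) = u(b) = 0, ∫_a^b u dx = V₀ > 0, κ > 0, α ∈ (0, π/2), and u'(a) ≥ 0. Then u(x) > 0 for all x ∈ (a,b). -/
/-!
At an interior minimum `μ` of `u` on `[a, b]` we have `u' μ = 0` and `u'' μ ≥ 0`. The equation
reads `u'' = c u - g` with `c = κ cos α ≥ 0` and `g x = λ + κ sin α (x - b)` strictly increasing,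
so for `a < x < μ` we get `u'' x ≥ c u μ - g x > c u μ - g μ = u'' μ ≥ 0`. Hence `u'` strictly
increases on `[a, μ]`, and `0 = u' μ > u' a ≥ 0` is absurd. So `u` has no interior minimum on
`[a, b]`, and since it vanishes at both ends it is positive inside.
-/

open Real Set Filter Topology

theorem IsLocalMin.hasDerivAt_deriv_nonneg {f f' : ℝ → ℝ} {x f'' : ℝ} (h : IsLocalMin f x)
    (hf : ∀ᶠ y in 𝓝 x, HasDerivAt f (f' y) y) (hf' : HasDerivAt f' f'' x) : 0 ≤ f'' := by
  -- If `f'' < 0`, the second-derivative test makes `x` a local maximum as well, so `f` is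
  -- locally constant and `f'' = 0`.
  by_contra! hneg
  have hd : deriv f =ᶠ[𝓝 x] f' := hf.mono fun y hy => hy.deriv
  have hmax : IsLocalMax f x :=
    isLocalMax_of_deriv_deriv_neg (by rwa [hd.deriv_eq, hf'.deriv])
      (by rw [hd.eq_of_nhds]; exact h.hasDerivAt_eq_zero hf.self_of_nhds)
      hf.self_of_nhds.continuousAt
  have hconst : f =ᶠ[𝓝 x] fun _ => f x := (h.and hmax).mono fun y hy => le_antisymm hy.2 hy.1
  have hf'_zero : f' =ᶠ[𝓝 x] fun _ => 0 :=
    hd.symm.trans (hconst.deriv.trans (Eventually.of_forall fun _ => deriv_const _ _))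
  exact hneg.ne (hf'.unique ((hasDerivAt_const x (0 : ℝ)).congr_of_eventuallyEq hf'_zero))

theorem pos_of_forall_not_isMinOn_Icc {a b : ℝ} {u : ℝ → ℝ} (hu : ContinuousOn u (Icc a b))
    (ha : u a = 0) (hb : u b = 0) (hmin : ∀ μ ∈ Ioo a b, ¬ IsMinOn u (Icc a b) μ) :
    ∀ x ∈ Ioo a b, 0 < u x := by
  intro x hx
  obtain ⟨μ, hμ, hμmin⟩ :=
    isCompact_Icc.exists_isMinOn (nonempty_Icc.2 (hx.1.trans hx.2).le) hu
  have hμ_end : u μ = 0 := by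
    by_cases hμI : μ ∈ Ioo a b
    · exact absurd hμmin (hmin μ hμI)
    · rcases eq_endpoints_or_mem_Ioo_of_mem_Icc hμ with rfl | rfl | h
      exacts [ha, hb, absurd h hμI]
  refine lt_of_le_of_ne (hμ_end ▸ hμmin (Ioo_subset_Icc_self hx)) fun hx0 => hmin x hx ?_
  exact fun y hy => by rw [← hx0, ← hμ_end]; exact hμmin hy

theorem not_isMinOn_Icc_of_hasDerivWithinAt {a b c μ : ℝ} {u u' u'' g : ℝ → ℝ}
    (hc : 0 ≤ c) (hg : StrictMonoOn g (Ioo a b))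
    (hu' : ∀ x ∈ Icc a b, HasDerivWithinAt u (u' x) (Icc a b) x)
    (hu'' : ∀ x ∈ Icc a b, HasDerivWithinAt u' (u'' x) (Icc a b) x)
    (hode : ∀ x ∈ Ioo a b, u'' x = c * u x - g x) (ha' : 0 ≤ u' a) (hμ : μ ∈ Ioo a b) :
    ¬ IsMinOn u (Icc a b) μ := by
  intro hmin
  have hderiv : ∀ x ∈ Ioo a b, HasDerivAt u (u' x) x ∧ HasDerivAt u' (u'' x) x :=
    fun x hx => ⟨(hu' x (Ioo_subset_Icc_self hx)).hasDerivAt (Icc_mem_nhds hx.1 hx.2),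
      (hu'' x (Ioo_subset_Icc_self hx)).hasDerivAt (Icc_mem_nhds hx.1 hx.2)⟩
  have hloc : IsLocalMin u μ := hmin.isLocalMin (Icc_mem_nhds hμ.1 hμ.2)
  have hu'μ : u' μ = 0 := hloc.hasDerivAt_eq_zero (hderiv μ hμ).1
  have hu''μ : 0 ≤ u'' μ :=
    hloc.hasDerivAt_deriv_nonneg (eventually_of_mem (isOpen_Ioo.mem_nhds hμ) fun x hx =>
      (hderiv x hx).1) (hderiv μ hμ).2
  have haμ : Icc a μ ⊆ Icc a b := Icc_subset_Icc_right hμ.2.le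
  obtain ⟨ξ, hξ, hξ_slope⟩ := exists_hasDerivAt_eq_slope u' u'' hμ.1
    (fun x hx => (hu'' x (haμ hx)).continuousWithinAt.mono haμ)
    fun x hx => (hderiv x ⟨hx.1, hx.2.trans hμ.2⟩).2
  have hξI : ξ ∈ Ioo a b := ⟨hξ.1, hξ.2.trans hμ.2⟩
  have hu''ξ : 0 < u'' ξ := by
    have hcu : c * u μ ≤ c * u ξ := mul_le_mul_of_nonneg_left (hmin (Ioo_subset_Icc_self hξI)) hc
    have hgξ : g ξ < g μ := hg hξI hμ hξ.2
    rw [hode ξ hξI]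
    linarith [hode μ hμ]
  rw [hξ_slope, hu'μ, div_pos_iff] at hu''ξ
  rcases hu''ξ with ⟨h, -⟩ | ⟨-, h⟩ <;> linarith [hμ.1]

theorem stmt_0_general (a b lam κ α : ℝ) (u u' u'' : ℝ → ℝ)
    (hκ : 0 < κ) (hα : α ∈ Set.Ioo 0 (Real.pi / 2))
    (hu' : ∀ x ∈ Set.Icc a b, HasDerivWithinAt u (u' x) (Set.Icc a b) x)
    (hu'' : ∀ x ∈ Set.Icc a b, HasDerivWithinAt u' (u'' x) (Set.Icc a b) x)
    (hode : ∀ x ∈ Set.Ioo a b,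
      -u'' x = lam - κ * Real.cos α * u x + κ * Real.sin α * (x - b))
    (ha0 : u a = 0) (hb0 : u b = 0)
    (ha' : 0 ≤ u' a) :
    ∀ x ∈ Set.Ioo a b, 0 < u x := by
  have hsin : 0 < sin α := sin_pos_of_pos_of_lt_pi hα.1 (by linarith [hα.2, pi_pos])
  have hcos : 0 < cos α := cos_pos_of_mem_Ioo ⟨by linarith [hα.1, pi_pos], hα.2⟩
  have hg : StrictMonoOn (fun x => lam + κ * sin α * (x - b)) (Ioo a b) := fun x _ y _ hxy => by
    have := mul_pos hκ hsin
    dsimp only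
    nlinarith
  refine pos_of_forall_not_isMinOn_Icc (fun x hx => (hu' x hx).continuousWithinAt) ha0 hb0
    fun μ hμ => not_isMinOn_Icc_of_hasDerivWithinAt (mul_nonneg hκ.le hcos.le) hg hu' hu''
      (fun x hx => by linarith [hode x hx]) ha' hμ

/-- Positivity of the drop profile when the rear slope is nonnegative. -/
theorem stmt_0 (a b lam κ α V₀ : ℝ) (u u' u'' : ℝ → ℝ)
    (hab : a < b) (hκ : 0 < κ) (hα : α ∈ Set.Ioo 0 (Real.pi / 2)) (hV : 0 < V₀)
    (hu' : ∀ x ∈ Set.Icc a b, HasDerivWithinAt u (u' x) (Set.Icc a b) x)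
    (hu'' : ∀ x ∈ Set.Icc a b, HasDerivWithinAt u' (u'' x) (Set.Icc a b) x)
    (hu''c : ContinuousOn u'' (Set.Icc a b))
    (hode : ∀ x ∈ Set.Ioo a b,
      -u'' x = lam - κ * Real.cos α * u x + κ * Real.sin α * (x - b))
    (ha0 : u a = 0) (hb0 : u b = 0)
    (hvol : ∫ x in a..b, u x = V₀)
    (ha' : 0 ≤ u' a) :
    ∀ x ∈ Set.Ioo a b, 0 < u x :=
  stmt_0_general a b lam κ α u u' u'' hκ hα hu' hu'' hode ha0 hb0 ha'
end

section
/- Let u ∈ C^2([a,b]) satisfy -u'' = λ - κ cos(α) u + κ sin(α)(x - b) on (a,b) with u(a) = u(b) = 0, ∫_a^b u dx = V₀ > 0, κ > 0, α ∈ (0, π/2). Then u'(b) < 0 (the drop meets the ground with strictly negative slope at the front endpoint). -/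
/-!
The energy `u'^2/2 - c u^2/2 + (λ + s (x - b)) u` (with `c = κ cos α`, `s = κ sin α`) has
derivative `s u`, so integrating over `[a, b]` gives `u'(b)^2 - u'(a)^2 = 2 s V₀ > 0`, whence
`u'(b) ≠ 0`. If `u'(b) > 0`, then `u < 0` just left of `b`, and a maximum principle rules out
positive values of `u`: at a positive maximum `m`, `u'' ≤ 0` forces the forcing term `λ + s (x - b)`
to be positive at `m`, while at the negative minimum of `u` on `[m, b]` it would have to be
negative; this contradicts its monotonicity. Hence `u ≤ 0`, contradicting `∫ u = V₀ > 0`.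
-/

open MeasureTheory Real Set Filter Topology

theorem IsLocalMin.nonneg_of_hasDerivAt_of_hasDerivAt {w w' : ℝ → ℝ} {m w'' : ℝ}
    (hmin : IsLocalMin w m) (hw : ∀ᶠ y in 𝓝 m, HasDerivAt w (w' y) y)
    (hw' : HasDerivAt w' w'' m) : 0 ≤ w'' := by
  by_contra! hneg
  have hderiv : deriv w =ᶠ[𝓝 m] w' := hw.mono fun y hy => hy.deriv
  have hderiv2 : deriv (deriv w) m = w'' := by rw [hderiv.deriv_eq]; exact hw'.deriv
  -- Since `w'(m) = 0` and `w''(m) < 0`, `m` is also a local maximum, so `w` is locally constant.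
  have hmax : IsLocalMax w m :=
    isLocalMax_of_deriv_deriv_neg (hderiv2 ▸ hneg)
      (hderiv.eq_of_nhds ▸ hmin.hasDerivAt_eq_zero hw.self_of_nhds)
      hw.self_of_nhds.continuousAt
  have hconst : w =ᶠ[𝓝 m] fun _ => w m :=
    (hmin.and hmax).mono fun y hy => le_antisymm hy.2 hy.1
  have : deriv (deriv w) m = 0 := by rw [hconst.deriv.deriv_eq]; simp
  linarith

theorem IsLocalMax.nonpos_of_hasDerivAt_of_hasDerivAt {w w' : ℝ → ℝ} {m w'' : ℝ}
    (hmax : IsLocalMax w m) (hw : ∀ᶠ y in 𝓝 m, HasDerivAt w (w' y) y)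
    (hw' : HasDerivAt w' w'' m) : w'' ≤ 0 := by
  have := hmax.neg.nonneg_of_hasDerivAt_of_hasDerivAt (hw.mono fun y hy => hy.neg) hw'.neg
  linarith

theorem eventually_nhdsLT_lt_of_hasDerivWithinAt_pos {f : ℝ → ℝ} {a b f' : ℝ} (hab : a < b)
    (hf : HasDerivWithinAt f f' (Icc a b) b) (hf' : 0 < f') : ∀ᶠ x in 𝓝[<] b, f x < f b := by
  have hslope : Tendsto (slope f b) (𝓝[<] b) (𝓝 f') :=
    (hasDerivWithinAt_iff_tendsto_slope' self_notMem_Iio).mp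
      (hf.mono_of_mem_nhdsWithin (Icc_mem_nhdsLT hab))
  filter_upwards [hslope.eventually (lt_mem_nhds hf'), self_mem_nhdsWithin] with x hx hxb
  exact (slope_pos_iff_gt hxb).mp hx

theorem hasDerivAt_energy {u u' f : ℝ → ℝ} {x c u'' f' : ℝ} (hu : HasDerivAt u (u' x) x)
    (hu' : HasDerivAt u' u'' x) (hf : HasDerivAt f f' x) (hode : u'' = c * u x - f x) :
    HasDerivAt (fun y => u' y ^ 2 / 2 - c * u y ^ 2 / 2 + f y * u y) (f' * u x) x := by
  refine (((hu'.pow 2).div_const 2).sub (((hu.pow 2).const_mul c).div_const 2)).add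
    (hf.mul hu) |>.congr_deriv ?_
  rw [hode]
  ring

theorem sq_deriv_sub_sq_deriv_eq_integral {u u' u'' : ℝ → ℝ} {a b c lam s : ℝ} (hab : a ≤ b)
    (hu : ContinuousOn u (Icc a b)) (hu'c : ContinuousOn u' (Icc a b))
    (hu' : ∀ x ∈ Ioo a b, HasDerivAt u (u' x) x) (hu'' : ∀ x ∈ Ioo a b, HasDerivAt u' (u'' x) x)
    (hode : ∀ x ∈ Ioo a b, u'' x = c * u x - (lam + s * (x - b)))
    (ha : u a = 0) (hb : u b = 0) :
    u' b ^ 2 / 2 - u' a ^ 2 / 2 = s * ∫ x in a..b, u x := by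
  have hf : ∀ x, HasDerivAt (fun y => lam + s * (y - b)) s x := fun x => by
    simpa using ((hasDerivAt_id x).sub_const b).const_mul s |>.const_add lam
  have hcont : ContinuousOn (fun y => u' y ^ 2 / 2 - c * u y ^ 2 / 2 + (lam + s * (y - b)) * u y)
      (Icc a b) := by fun_prop
  have hint : IntervalIntegrable (fun x => s * u x) volume a b :=
    (continuousOn_const.mul hu).intervalIntegrable_of_Icc hab
  rw [← intervalIntegral.integral_const_mul,
    intervalIntegral.integral_eq_sub_of_hasDeriv_right_of_le hab hcont
      (fun x hx => (hasDerivAt_energy (hu' x hx) (hu'' x hx) (hf x) (hode x hx)).hasDerivWithinAt)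
      hint, ha, hb]
  ring

theorem nonpos_of_monotoneOn_forcing {u u' u'' f : ℝ → ℝ} {a b c : ℝ} (hc : 0 < c)
    (hu : ContinuousOn u (Icc a b))
    (hu' : ∀ x ∈ Ioo a b, HasDerivAt u (u' x) x) (hu'' : ∀ x ∈ Ioo a b, HasDerivAt u' (u'' x) x)
    (hode : ∀ x ∈ Ioo a b, u'' x = c * u x - f x) (hf : MonotoneOn f (Ioo a b))
    (ha : u a = 0) (hb : u b = 0) (hneg : ∃ᶠ x in 𝓝[<] b, u x < 0) :
    ∀ x ∈ Icc a b, u x ≤ 0 := by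
  have hderiv : ∀ y ∈ Ioo a b, ∀ᶠ z in 𝓝 y, HasDerivAt u (u' z) z :=
    fun y hy => eventually_of_mem (Ioo_mem_nhds hy.1 hy.2) hu'
  intro x hx
  by_contra! hpos
  obtain ⟨m, hm, hmax⟩ := isCompact_Icc.exists_isMaxOn ⟨x, hx⟩ hu
  have hum : 0 < u m := hpos.trans_le (hmax hx)
  have hmI : m ∈ Ioo a b :=
    ⟨hm.1.lt_of_ne (by rintro rfl; linarith), hm.2.lt_of_ne (by rintro rfl; linarith)⟩
  have hfm : 0 < f m := by
    have := (hmax.isLocalMax (Icc_mem_nhds hmI.1 hmI.2)).nonpos_of_hasDerivAt_of_hasDerivAt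
      (hderiv m hmI) (hu'' m hmI)
    nlinarith [hode m hmI]
  obtain ⟨x₀, hux₀, hx₀⟩ := (hneg.and_eventually (Ioo_mem_nhdsLT hmI.2)).exists
  obtain ⟨m', hm', hmin⟩ := isCompact_Icc.exists_isMinOn ⟨x₀, Ioo_subset_Icc_self hx₀⟩
    (hu.mono (Icc_subset_Icc hm.1 le_rfl))
  have hum' : u m' < 0 := (hmin (Ioo_subset_Icc_self hx₀)).trans_lt hux₀
  have hm'I : m' ∈ Ioo m b :=
    ⟨hm'.1.lt_of_ne (by rintro rfl; linarith), hm'.2.lt_of_ne (by rintro rfl; linarith)⟩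
  have hm'ab : m' ∈ Ioo a b := ⟨hmI.1.trans hm'I.1, hm'I.2⟩
  have hfm' : f m' < 0 := by
    have := (hmin.isLocalMin (Icc_mem_nhds hm'I.1 hm'I.2)).nonneg_of_hasDerivAt_of_hasDerivAt
      (hderiv m' hm'ab) (hu'' m' hm'ab)
    nlinarith [hode m' hm'ab]
  linarith [hf hmI hm'ab hm'I.1.le]

theorem stmt_1_general (a b lam κ α V₀ : ℝ) (u u' u'' : ℝ → ℝ)
    (hab : a < b) (hκ : 0 < κ) (hα : α ∈ Set.Ioo 0 (Real.pi / 2)) (hV : 0 < V₀)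
    (hu' : ∀ x ∈ Set.Icc a b, HasDerivWithinAt u (u' x) (Set.Icc a b) x)
    (hu'' : ∀ x ∈ Set.Icc a b, HasDerivWithinAt u' (u'' x) (Set.Icc a b) x)
    (hode : ∀ x ∈ Set.Ioo a b,
      -u'' x = lam - κ * Real.cos α * u x + κ * Real.sin α * (x - b))
    (ha0 : u a = 0) (hb0 : u b = 0)
    (hvol : ∫ x in a..b, u x = V₀) :
    u' b < 0 := by
  have hc : 0 < κ * cos α := mul_pos hκ (cos_pos_of_mem_Ioo ⟨by linarith [hα.1, pi_pos], hα.2⟩)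
  have hs : 0 < κ * sin α := mul_pos hκ (sin_pos_of_pos_of_lt_pi hα.1 (by linarith [hα.2, pi_pos]))
  have hucont : ContinuousOn u (Icc a b) := fun x hx => (hu' x hx).continuousWithinAt
  have hu'I : ∀ x ∈ Ioo a b, HasDerivAt u (u' x) x := fun x hx =>
    (hu' x (Ioo_subset_Icc_self hx)).hasDerivAt (Icc_mem_nhds hx.1 hx.2)
  have hu''I : ∀ x ∈ Ioo a b, HasDerivAt u' (u'' x) x := fun x hx =>
    (hu'' x (Ioo_subset_Icc_self hx)).hasDerivAt (Icc_mem_nhds hx.1 hx.2)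
  have hode' : ∀ x ∈ Ioo a b, u'' x = κ * cos α * u x - (lam + κ * sin α * (x - b)) :=
    fun x hx => by linarith [hode x hx]
  have henergy := sq_deriv_sub_sq_deriv_eq_integral hab.le hucont
    (fun x hx => (hu'' x hx).continuousWithinAt) hu'I hu''I hode' ha0 hb0
  rw [hvol] at henergy
  by_contra! hb'
  have hb'pos : 0 < u' b := hb'.lt_of_ne' fun h => by nlinarith [sq_nonneg (u' a), mul_pos hs hV]
  have hforcing : MonotoneOn (fun x => lam + κ * sin α * (x - b)) (Ioo a b) :=
    fun x _ y _ hxy => by dsimp only; nlinarith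
  have hnonpos := nonpos_of_monotoneOn_forcing hc hucont hu'I hu''I hode' hforcing ha0 hb0
    (hb0 ▸ eventually_nhdsLT_lt_of_hasDerivWithinAt_pos hab (hu' b ⟨hab.le, le_rfl⟩) hb'pos).frequently
  have : 0 ≤ ∫ x in a..b, -u x :=
    intervalIntegral.integral_nonneg hab.le fun x hx => neg_nonneg.mpr (hnonpos x hx)
  rw [intervalIntegral.integral_neg, hvol] at this
  linarith

/-- The drop meets the ground with strictly negative slope at the front endpoint. -/
theorem stmt_1 (a b lam κ α V₀ : ℝ) (u u' u'' : ℝ → ℝ)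
    (hab : a < b) (hκ : 0 < κ) (hα : α ∈ Set.Ioo 0 (Real.pi / 2)) (hV : 0 < V₀)
    (hu' : ∀ x ∈ Set.Icc a b, HasDerivWithinAt u (u' x) (Set.Icc a b) x)
    (hu'' : ∀ x ∈ Set.Icc a b, HasDerivWithinAt u' (u'' x) (Set.Icc a b) x)
    (hu''c : ContinuousOn u'' (Set.Icc a b))
    (hode : ∀ x ∈ Set.Ioo a b,
      -u'' x = lam - κ * Real.cos α * u x + κ * Real.sin α * (x - b))
    (ha0 : u a = 0) (hb0 : u b = 0)
    (hvol : ∫ x in a..b, u x = V₀) :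
    u' b < 0 :=
  stmt_1_general a b lam κ α V₀ u u' u'' hab hκ hα hV hu' hu'' hode ha0 hb0 hvol
end

section
/- Let u ∈ C^2([a,b]) satisfy -u'' = λ - κ cos(α) u + κ sin(α)(x - b) on (a,b) with u(a) = u(b) = 0, ∫_a^b u dx = V₀, and u > 0 on (a,b). Then u'(b)² - u'(a)² = 2 κ sin(α) V₀. -/
/-!
Multiplying the equation by `u'` shows that
`E = u'² / 2 + λ u - κ cos α · u² / 2 + κ sin α · (x - b) u` is a first integral up to the
source term: `E' = κ sin α · u`. Integrating over `[a, b]` and using `u(a) = u(b) = 0` gives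
`(u'(b)² - u'(a)²) / 2 = κ sin α · V₀`.
-/

open Set

/-- The energy of `-u'' = λ - k u + s (x - c)`, with `u'` the derivative of `u`. -/
noncomputable def firstIntegral (lam k s c : ℝ) (u u' : ℝ → ℝ) (x : ℝ) : ℝ :=
  u' x ^ 2 / 2 + lam * u x - k * u x ^ 2 / 2 + s * (x - c) * u x

variable {lam k s c a b : ℝ} {u u' u'' : ℝ → ℝ}

theorem hasDerivAt_firstIntegral {x : ℝ} (hu : HasDerivAt u (u' x) x)
    (hu' : HasDerivAt u' (u'' x) x) (hode : -u'' x = lam - k * u x + s * (x - c)) :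
    HasDerivAt (firstIntegral lam k s c u u') (s * u x) x := by
  have hE := ((((hu'.pow 2).div_const 2).add (hu.const_mul lam)).sub
    ((hu.pow 2).const_mul k |>.div_const 2)).add
    ((((hasDerivAt_id x).sub_const c).const_mul s).mul hu)
  refine hE.congr_deriv ?_
  simp only [id_eq]
  linear_combination (-u' x) * hode

theorem continuousOn_firstIntegral {t : Set ℝ} (hu : ContinuousOn u t) (hu' : ContinuousOn u' t) :
    ContinuousOn (firstIntegral lam k s c u u') t := by
  unfold firstIntegral
  fun_prop

theorem firstIntegral_sub_eq_integral (hab : a ≤ b)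
    (hu : ∀ x ∈ Icc a b, HasDerivWithinAt u (u' x) (Icc a b) x)
    (hu' : ∀ x ∈ Icc a b, HasDerivWithinAt u' (u'' x) (Icc a b) x)
    (hode : ∀ x ∈ Ioo a b, -u'' x = lam - k * u x + s * (x - c)) :
    firstIntegral lam k s c u u' b - firstIntegral lam k s c u u' a = s * ∫ x in a..b, u x := by
  have hcu : ContinuousOn u (Icc a b) := fun x hx => (hu x hx).continuousWithinAt
  have hcu' : ContinuousOn u' (Icc a b) := fun x hx => (hu' x hx).continuousWithinAt
  have hderiv (f f' : ℝ → ℝ) (hf : ∀ x ∈ Icc a b, HasDerivWithinAt f (f' x) (Icc a b) x)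
      (x : ℝ) (hx : x ∈ Ioo a b) : HasDerivAt f (f' x) x :=
    (hf x (Ioo_subset_Icc_self hx)).hasDerivAt (Icc_mem_nhds hx.1 hx.2)
  rw [← intervalIntegral.integral_const_mul]
  refine (intervalIntegral.integral_eq_sub_of_hasDerivAt_of_le hab
    (continuousOn_firstIntegral hcu hcu') (fun x hx => ?_) ?_).symm
  · exact hasDerivAt_firstIntegral (hderiv u u' hu x hx) (hderiv u' u'' hu' x hx) (hode x hx)
  · exact ((hcu.const_smul s).mono (uIcc_of_le hab).subset).intervalIntegrable

theorem stmt_2_general (a b lam κ α V₀ : ℝ) (u u' u'' : ℝ → ℝ)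
    (hab : a < b)
    (hu' : ∀ x ∈ Set.Icc a b, HasDerivWithinAt u (u' x) (Set.Icc a b) x)
    (hu'' : ∀ x ∈ Set.Icc a b, HasDerivWithinAt u' (u'' x) (Set.Icc a b) x)
    (hode : ∀ x ∈ Set.Ioo a b,
      -u'' x = lam - κ * Real.cos α * u x + κ * Real.sin α * (x - b))
    (ha0 : u a = 0) (hb0 : u b = 0)
    (hvol : ∫ x in a..b, u x = V₀) :
    (u' b) ^ 2 - (u' a) ^ 2 = 2 * κ * Real.sin α * V₀ := by
  have h := firstIntegral_sub_eq_integral hab.le hu' hu'' hode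
  simp only [firstIntegral, ha0, hb0, hvol] at h
  linarith

/-- Identity relating advancing and receding slopes to the volume. -/
theorem stmt_2 (a b lam κ α V₀ : ℝ) (u u' u'' : ℝ → ℝ)
    (hab : a < b) (hκ : 0 < κ) (hα : α ∈ Set.Ioo 0 (Real.pi / 2)) (hV : 0 < V₀)
    (hu' : ∀ x ∈ Set.Icc a b, HasDerivWithinAt u (u' x) (Set.Icc a b) x)
    (hu'' : ∀ x ∈ Set.Icc a b, HasDerivWithinAt u' (u'' x) (Set.Icc a b) x)
    (hu''c : ContinuousOn u'' (Set.Icc a b))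
    (hode : ∀ x ∈ Set.Ioo a b,
      -u'' x = lam - κ * Real.cos α * u x + κ * Real.sin α * (x - b))
    (ha0 : u a = 0) (hb0 : u b = 0)
    (hpos : ∀ x ∈ Set.Ioo a b, 0 < u x)
    (hvol : ∫ x in a..b, u x = V₀) :
    (u' b) ^ 2 - (u' a) ^ 2 = 2 * κ * Real.sin α * V₀ :=
  stmt_2_general a b lam κ α V₀ u u' u'' hab hu' hu'' hode ha0 hb0 hvol
end

section
/- Let u₁, u₂ ∈ C^2([a,b]) both satisfy -uᵢ'' = λᵢ - κ cos(α) uᵢ + κ sin(α)(x - b) on (a,b) with uᵢ(a) = uᵢ(b) = 0, uᵢ > 0 on (a,b), and ∫_a^b u₁ dx = ∫_a^b u₂ dx = V₀, for constants λ₁, λ₂ ∈ ℝ. Then λ₁ = λ₂ and u₁ = u₂ on [a,b]. -/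
/-!
The difference `w = u₁ - u₂` solves `w'' = c w - μ` with `c = κ cos α > 0`, `μ = λ₁ - λ₂`,
vanishes at `a` and `b`, and has mean zero. Testing the equation against `w` and integrating by
parts gives `∫ (w'² + c w²) = μ ∫ w = 0`, so `w ≡ 0`; the equation then forces `μ = 0`.
-/

open MeasureTheory Real Set

theorem eqOn_zero_of_hasDerivWithinAt_of_eqOn_zero {f f' : ℝ → ℝ} {s : Set ℝ}
    (hs : UniqueDiffOn ℝ s) (hf : ∀ x ∈ s, HasDerivWithinAt f (f' x) s x) (h0 : EqOn f 0 s) :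
    EqOn f' 0 s := fun x hx =>
  (hs x hx).eq_deriv s (hf x hx) ((hasDerivWithinAt_const x s 0).congr h0 (h0 hx))

section LinearDirichletProblem

variable {a b c μ : ℝ} {w w' w'' : ℝ → ℝ}

theorem integral_deriv_sq_add_mul_sq_eq_mul_integral (hab : a ≤ b)
    (hw : ∀ x ∈ Icc a b, HasDerivWithinAt w (w' x) (Icc a b) x)
    (hw' : ∀ x ∈ Icc a b, HasDerivWithinAt w' (w'' x) (Icc a b) x)
    (hode : ∀ x ∈ Ioo a b, w'' x = c * w x - μ) (ha : w a = 0) (hb : w b = 0) :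
    ∫ x in a..b, (w' x ^ 2 + c * w x ^ 2) = μ * ∫ x in a..b, w x := by
  have hwc : ContinuousOn w (Icc a b) := fun x hx => (hw x hx).continuousWithinAt
  have hw'c : ContinuousOn w' (Icc a b) := fun x hx => (hw' x hx).continuousWithinAt
  have hderiv : ∀ x ∈ Ioo a b,
      HasDerivAt (fun y => w y * w' y) ((w' x ^ 2 + c * w x ^ 2) - μ * w x) x := by
    intro x hx
    have hIcc : Icc a b ∈ nhds x := Icc_mem_nhds hx.1 hx.2
    refine (((hw x (Ioo_subset_Icc_self hx)).hasDerivAt hIcc).mul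
      ((hw' x (Ioo_subset_Icc_self hx)).hasDerivAt hIcc)).congr_deriv ?_
    rw [hode x hx]
    ring
  have hint : IntervalIntegrable (fun x => w' x ^ 2 + c * w x ^ 2) volume a b :=
    ((hw'c.pow 2).add ((hwc.pow 2).const_smul c)).intervalIntegrable_of_Icc hab
  have hwint : IntervalIntegrable (fun x => μ * w x) volume a b :=
    (hwc.const_smul μ).intervalIntegrable_of_Icc hab
  have hFTC := intervalIntegral.integral_eq_sub_of_hasDerivAt_of_le hab (hwc.mul hw'c) hderiv
    (hint.sub hwint)
  rw [intervalIntegral.integral_sub hint hwint, intervalIntegral.integral_const_mul] at hFTC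
  rw [Pi.mul_apply, Pi.mul_apply, ha, hb, zero_mul, zero_mul, sub_zero] at hFTC
  linarith

theorem eqOn_zero_of_integral_eq_zero_of_deriv_deriv_eq (hab : a < b) (hc : 0 < c)
    (hw : ∀ x ∈ Icc a b, HasDerivWithinAt w (w' x) (Icc a b) x)
    (hw' : ∀ x ∈ Icc a b, HasDerivWithinAt w' (w'' x) (Icc a b) x)
    (hode : ∀ x ∈ Ioo a b, w'' x = c * w x - μ) (ha : w a = 0) (hb : w b = 0)
    (hmean : ∫ x in a..b, w x = 0) :
    EqOn w 0 (Icc a b) := by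
  intro x hx
  by_contra hne
  replace hne : w x ≠ 0 := hne
  have henergy := integral_deriv_sq_add_mul_sq_eq_mul_integral hab.le hw hw' hode ha hb
  rw [hmean, mul_zero] at henergy
  have hwc : ContinuousOn w (Icc a b) := fun y hy => (hw y hy).continuousWithinAt
  have hw'c : ContinuousOn w' (Icc a b) := fun y hy => (hw' y hy).continuousWithinAt
  have hcont : ContinuousOn (fun y => w' y ^ 2 + c * w y ^ 2) (Icc a b) :=
    (hw'c.pow 2).add ((hwc.pow 2).const_smul c)
  exact (intervalIntegral.integral_pos hab hcont (fun y _ => by positivity)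
    ⟨x, hx, by positivity⟩).ne' henergy

theorem eq_zero_of_eqOn_zero_of_deriv_deriv_eq (hab : a < b)
    (hw : ∀ x ∈ Icc a b, HasDerivWithinAt w (w' x) (Icc a b) x)
    (hw' : ∀ x ∈ Icc a b, HasDerivWithinAt w' (w'' x) (Icc a b) x)
    (hode : ∀ x ∈ Ioo a b, w'' x = c * w x - μ) (h0 : EqOn w 0 (Icc a b)) :
    μ = 0 := by
  have hmid : (a + b) / 2 ∈ Ioo a b := ⟨by linarith, by linarith⟩
  have hw'0 := eqOn_zero_of_hasDerivWithinAt_of_eqOn_zero (uniqueDiffOn_Icc hab) hw h0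
  have hw''0 := eqOn_zero_of_hasDerivWithinAt_of_eqOn_zero (uniqueDiffOn_Icc hab) hw' hw'0
  have h := hode _ hmid
  rw [hw''0 (Ioo_subset_Icc_self hmid), h0 (Ioo_subset_Icc_self hmid)] at h
  simp only [Pi.zero_apply, mul_zero, zero_sub, zero_eq_neg] at h
  exact h

end LinearDirichletProblem

theorem stmt_3_general (a b lam₁ lam₂ κ α V₀ : ℝ) (u₁ u₁' u₁'' u₂ u₂' u₂'' : ℝ → ℝ)
    (hab : a < b) (hκ : 0 < κ) (hα : α ∈ Set.Ioo 0 (Real.pi / 2))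
    (hu₁' : ∀ x ∈ Set.Icc a b, HasDerivWithinAt u₁ (u₁' x) (Set.Icc a b) x)
    (hu₁'' : ∀ x ∈ Set.Icc a b, HasDerivWithinAt u₁' (u₁'' x) (Set.Icc a b) x)
    (hu₂' : ∀ x ∈ Set.Icc a b, HasDerivWithinAt u₂ (u₂' x) (Set.Icc a b) x)
    (hu₂'' : ∀ x ∈ Set.Icc a b, HasDerivWithinAt u₂' (u₂'' x) (Set.Icc a b) x)
    (hode₁ : ∀ x ∈ Set.Ioo a b,
      -u₁'' x = lam₁ - κ * Real.cos α * u₁ x + κ * Real.sin α * (x - b))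
    (hode₂ : ∀ x ∈ Set.Ioo a b,
      -u₂'' x = lam₂ - κ * Real.cos α * u₂ x + κ * Real.sin α * (x - b))
    (ha₁ : u₁ a = 0) (hb₁ : u₁ b = 0) (ha₂ : u₂ a = 0) (hb₂ : u₂ b = 0)
    (hvol₁ : ∫ x in a..b, u₁ x = V₀) (hvol₂ : ∫ x in a..b, u₂ x = V₀) :
    lam₁ = lam₂ ∧ ∀ x ∈ Set.Icc a b, u₁ x = u₂ x := by
  have hc : 0 < κ * cos α :=
    mul_pos hκ (cos_pos_of_mem_Ioo ⟨by linarith [hα.1, pi_pos], hα.2⟩)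
  have hw := fun x hx => (hu₁' x hx).sub (hu₂' x hx)
  have hw' := fun x hx => (hu₁'' x hx).sub (hu₂'' x hx)
  have hode : ∀ x ∈ Ioo a b,
      u₁'' x - u₂'' x = κ * cos α * (u₁ x - u₂ x) - (lam₁ - lam₂) := by
    intro x hx
    linarith [hode₁ x hx, hode₂ x hx]
  have hmean : ∫ x in a..b, (u₁ x - u₂ x) = 0 := by
    rw [intervalIntegral.integral_sub
      (ContinuousOn.intervalIntegrable_of_Icc hab.le fun x hx => (hu₁' x hx).continuousWithinAt)
      (ContinuousOn.intervalIntegrable_of_Icc hab.le fun x hx => (hu₂' x hx).continuousWithinAt),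
      hvol₁, hvol₂, sub_self]
  have h0 : EqOn (fun x => u₁ x - u₂ x) 0 (Icc a b) :=
    eqOn_zero_of_integral_eq_zero_of_deriv_deriv_eq hab hc hw hw' hode
      (by simp [ha₁, ha₂]) (by simp [hb₁, hb₂]) hmean
  exact ⟨sub_eq_zero.mp (eq_zero_of_eqOn_zero_of_deriv_deriv_eq hab hw hw' hode h0),
    fun x hx => sub_eq_zero.mp (h0 hx)⟩

/-- Uniqueness of the drop profile and Lagrange multiplier with prescribed support and volume. -/
theorem stmt_3 (a b lam₁ lam₂ κ α V₀ : ℝ) (u₁ u₁' u₁'' u₂ u₂' u₂'' : ℝ → ℝ)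
    (hab : a < b) (hκ : 0 < κ) (hα : α ∈ Set.Ioo 0 (Real.pi / 2)) (hV : 0 < V₀)
    (hu₁' : ∀ x ∈ Set.Icc a b, HasDerivWithinAt u₁ (u₁' x) (Set.Icc a b) x)
    (hu₁'' : ∀ x ∈ Set.Icc a b, HasDerivWithinAt u₁' (u₁'' x) (Set.Icc a b) x)
    (hu₁''c : ContinuousOn u₁'' (Set.Icc a b))
    (hu₂' : ∀ x ∈ Set.Icc a b, HasDerivWithinAt u₂ (u₂' x) (Set.Icc a b) x)
    (hu₂'' : ∀ x ∈ Set.Icc a b, HasDerivWithinAt u₂' (u₂'' x) (Set.Icc a b) x)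
    (hu₂''c : ContinuousOn u₂'' (Set.Icc a b))
    (hode₁ : ∀ x ∈ Set.Ioo a b,
      -u₁'' x = lam₁ - κ * Real.cos α * u₁ x + κ * Real.sin α * (x - b))
    (hode₂ : ∀ x ∈ Set.Ioo a b,
      -u₂'' x = lam₂ - κ * Real.cos α * u₂ x + κ * Real.sin α * (x - b))
    (ha₁ : u₁ a = 0) (hb₁ : u₁ b = 0) (ha₂ : u₂ a = 0) (hb₂ : u₂ b = 0)
    (hpos₁ : ∀ x ∈ Set.Ioo a b, 0 < u₁ x) (hpos₂ : ∀ x ∈ Set.Ioo a b, 0 < u₂ x)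
    (hvol₁ : ∫ x in a..b, u₁ x = V₀) (hvol₂ : ∫ x in a..b, u₂ x = V₀) :
    lam₁ = lam₂ ∧ ∀ x ∈ Set.Icc a b, u₁ x = u₂ x :=
  stmt_3_general a b lam₁ lam₂ κ α V₀ u₁ u₁' u₁'' u₂ u₂' u₂'' hab hκ hα hu₁' hu₁'' hu₂' hu₂'' hode₁
    hode₂ ha₁ hb₁ ha₂ hb₂ hvol₁ hvol₂
end

section
/- With the setup of the previous statement (H strictly decreasing, H(ℓ) - G(ℓ) = κ sin α V₀, G(ℓ_c) = 0, F = G + H), the traveling wave speed c defined by c = ½(H(ℓ₀) - G(ℓ₀)) when G(ℓ₀) > 0 and c = H(ℓ₀) - β when G(ℓ₀) = 0 (i.e. ℓ₀ = ℓ_c) satisfies: c = ½ V₀ κ sin α if V₀ ≤ 2β/(κ sin α), and c = V₀ κ sin α - β if V₀ ≥ 2β/(κ sin α). -/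
/-!
Since `G` is decreasing and vanishes at `ℓc`, `G ℓ₀ ≥ 0`, and the defining equation of `ℓ₀` is a
complementarity condition: `F ℓ₀ ≥ 2β`, with equality unless `ℓ₀ = ℓc`. If `G ℓ₀ > 0`, then
`F ℓ₀ = 2β`, i.e. `2 G ℓ₀ + κ sin α V₀ = 2β`, which forces the volume below the threshold, and
`c = κ sin α V₀ / 2`. If `G ℓ₀ = 0`, then `H ℓ₀ = κ sin α V₀ ≥ 2β` puts the volume above the
threshold, and `c = κ sin α V₀ - β`. At the threshold itself the two formulas agree.
-/

open Real Set

lemma nonneg_and_eq_zero_or_of_max_neg_eq_zero {α : Type*} [AddCommGroup α] [LinearOrder α]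
    [IsOrderedAddMonoid α] {x y : α} (h : max (-x) y = 0) : 0 ≤ x ∧ (x = 0 ∨ y = 0) := by
  rcases max_eq_iff.mp h with ⟨hx, -⟩ | ⟨hy, hx⟩
  · exact ⟨(neg_eq_zero.mp hx).ge, .inl (neg_eq_zero.mp hx)⟩
  · exact ⟨neg_nonpos.mp (hy ▸ hx), .inr hy⟩

lemma speed_eq_of_complementarity {β s V g h c : ℝ} (hg : 0 ≤ g) (hgh : 0 ≤ g + h - 2 * β)
    (hcompl : g + h - 2 * β = 0 ∨ g = 0) (hhg : h - g = s * V)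
    (hc₁ : 0 < g → c = (h - g) / 2) (hc₂ : g = 0 → c = h - β) :
    (s * V ≤ 2 * β → c = s * V / 2) ∧ (2 * β ≤ s * V → c = s * V - β) := by
  rcases hg.eq_or_lt with hg₀ | hg₀
  · have hc := hc₂ hg₀.symm
    constructor <;> intro <;> linarith
  · have hc := hc₁ hg₀
    have hF : g + h - 2 * β = 0 := hcompl.resolve_right hg₀.ne'
    constructor <;> intro <;> linarith

theorem stmt_10_general (β κ α V₀ ℓc c ℓ₀ : ℝ) (G H : ℝ → ℝ)
    (hκ : 0 < κ) (hα : α ∈ Set.Ioo 0 (Real.pi / 2))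
    (hℓc : 0 < ℓc)
    (hGanti : StrictAntiOn G (Set.Ioc 0 ℓc))
    (hHG : ∀ ℓ ∈ Set.Ioc 0 ℓc, H ℓ - G ℓ = κ * Real.sin α * V₀)
    (hGℓc : G ℓc = 0)
    (hℓ₀ : ℓ₀ ∈ Set.Ioc 0 ℓc)
    (hmax : max (-(G ℓ₀ + H ℓ₀ - 2 * β)) (ℓ₀ - ℓc) = 0)
    (hc₁ : 0 < G ℓ₀ → c = (H ℓ₀ - G ℓ₀) / 2)
    (hc₂ : G ℓ₀ = 0 → c = H ℓ₀ - β) :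
    (V₀ ≤ 2 * β / (κ * Real.sin α) → c = V₀ * κ * Real.sin α / 2) ∧
      (2 * β / (κ * Real.sin α) ≤ V₀ → c = V₀ * κ * Real.sin α - β) := by
  have hs : 0 < κ * sin α := mul_pos hκ (sin_pos_of_pos_of_lt_pi hα.1 (by linarith [hα.2, pi_pos]))
  have hG₀ : 0 ≤ G ℓ₀ := hGℓc ▸ hGanti.antitoneOn hℓ₀ (right_mem_Ioc.2 hℓc) hℓ₀.2
  obtain ⟨hF, hcompl⟩ := nonneg_and_eq_zero_or_of_max_neg_eq_zero hmax
  have hcompl' : G ℓ₀ + H ℓ₀ - 2 * β = 0 ∨ G ℓ₀ = 0 :=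
    hcompl.imp_right fun h ↦ by rw [sub_eq_zero.mp h, hGℓc]
  obtain ⟨hbelow, habove⟩ :=
    speed_eq_of_complementarity hG₀ hF hcompl' (hHG ℓ₀ hℓ₀) hc₁ hc₂
  rw [mul_assoc, mul_comm V₀]
  exact ⟨fun hV ↦ hbelow ((le_div_iff₀' hs).mp hV), fun hV ↦ habove ((div_le_iff₀' hs).mp hV)⟩

/-- Formula (18) for the traveling wave speed as a function of the volume. -/
theorem stmt_10 (β κ α V₀ ℓc c ℓ₀ : ℝ) (G H : ℝ → ℝ)
    (hβ : 0 < β) (hκ : 0 < κ) (hα : α ∈ Set.Ioo 0 (Real.pi / 2)) (hV : 0 < V₀)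
    (hℓc : 0 < ℓc)
    (hGanti : StrictAntiOn G (Set.Ioc 0 ℓc)) (hHanti : StrictAntiOn H (Set.Ioc 0 ℓc))
    (hHG : ∀ ℓ ∈ Set.Ioc 0 ℓc, H ℓ - G ℓ = κ * Real.sin α * V₀)
    (hGℓc : G ℓc = 0)
    (hℓ₀ : ℓ₀ ∈ Set.Ioc 0 ℓc)
    (hmax : max (-(G ℓ₀ + H ℓ₀ - 2 * β)) (ℓ₀ - ℓc) = 0)
    (hc₁ : 0 < G ℓ₀ → c = (H ℓ₀ - G ℓ₀) / 2)
    (hc₂ : G ℓ₀ = 0 → c = H ℓ₀ - β) :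
    (V₀ ≤ 2 * β / (κ * Real.sin α) → c = V₀ * κ * Real.sin α / 2) ∧
      (2 * β / (κ * Real.sin α) ≤ V₀ → c = V₀ * κ * Real.sin α - β) :=
  stmt_10_general β κ α V₀ ℓc c ℓ₀ G H hκ hα hℓc hGanti hHG hGℓc hℓ₀ hmax hc₁ hc₂
end

section
/- Under the hypotheses of the previous statement, if the initial inequalities are strict, a₁(0) < a₂(0) and b₁(0) < b₂(0), then a₁(t) < a₂(t) and b₁(t) < b₂(t) for all t > 0. -/
/-!
Put `f = max (a₁ - a₂) (b₁ - b₂)`; it suffices that `f` stays negative. At almost every time where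
`f < 0`, the active difference `u` satisfies `u' ≤ -K u`: `β` is `K`-Lipschitz, and the
nonincreasing terms `G`, `H` of the length have the right sign because the active difference
belongs to the pair of endpoints of the solution with the smaller length (for `a`) or the larger
length (for `b`). The delicate case is the `a`-difference when the first length is critical: then
both lengths equal `ℓc`, where they are maximal, so `a' = b'` for both solutions and the
`a`-difference moves like the `b`-difference. Hence `e^{Kt} f` is nonincreasing while `f < 0`,
and `f` cannot reach `0`.
-/

open MeasureTheory Real Set

section Calculus

variable {f : ℝ → ℝ}

theorem LocallyLipschitz.absolutelyContinuousOnInterval (hf : LocallyLipschitz f) (a b : ℝ) :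
    AbsolutelyContinuousOnInterval f a b :=
  (hf.locallyLipschitzOn.exists_lipschitzOnWith_of_compact isCompact_uIcc).choose_spec
    |>.absolutelyContinuousOnInterval

theorem LocallyLipschitz.ae_differentiableAt (hf : LocallyLipschitz f) :
    ∀ᵐ x, DifferentiableAt ℝ f x := by
  have h (n : ℕ) := (hf.absolutelyContinuousOnInterval (-n) n).ae_differentiableAt
  filter_upwards [ae_all_iff.2 h] with x hx
  obtain ⟨n, hn⟩ := exists_nat_ge |x|
  exact hx n (mem_uIcc.2 (Or.inl (abs_le.1 hn)))

theorem AbsolutelyContinuousOnInterval.le_of_ae_deriv_nonpos {a b : ℝ}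
    (hf : AbsolutelyContinuousOnInterval f a b) (hab : a ≤ b)
    (hd : ∀ᵐ t, t ∈ Ioo a b → deriv f t ≤ 0) : f b ≤ f a := by
  have : ∫ t in a..b, deriv f t ≤ 0 := by
    rw [intervalIntegral.integral_of_le hab, setIntegral_congr_set Ioo_ae_eq_Ioc.symm]
    exact setIntegral_nonpos_ae measurableSet_Ioo hd
  linarith [hf.integral_deriv_eq_sub]

theorem LocallyLipschitz.exp_mul_le_of_ae_deriv_add_mul_nonpos (hf : LocallyLipschitz f)
    (K : ℝ) {a b : ℝ} (hab : a ≤ b) (hd : ∀ᵐ t, t ∈ Ioo a b → deriv f t + K * f t ≤ 0) :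
    exp (K * b) * f b ≤ exp (K * a) * f a := by
  have hexp : ContDiff ℝ 1 fun t ↦ exp (K * t) := by fun_prop
  refine (hexp.contDiffOn.absolutelyContinuousOnInterval.fun_mul
    (hf.absolutelyContinuousOnInterval a b)).le_of_ae_deriv_nonpos hab ?_
  filter_upwards [hd, hf.ae_differentiableAt] with t hdt hft ht
  have : HasDerivAt (fun t ↦ exp (K * t) * f t) (exp (K * t) * (deriv f t + K * f t)) t := by
    have hexp' : HasDerivAt (fun t ↦ exp (K * t)) (exp (K * t) * K) t := by
      simpa using ((hasDerivAt_id t).const_mul K).exp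
    exact (hexp'.fun_mul hft.hasDerivAt).congr_deriv (by ring)
  rw [this.deriv]
  exact mul_nonpos_of_nonneg_of_nonpos (exp_pos _).le (hdt ht)

theorem LocallyLipschitz.neg_of_ae_deriv_add_mul_nonpos (hf : LocallyLipschitz f) (K : ℝ)
    {a : ℝ} (ha : f a < 0) (hd : ∀ᵐ t, a < t → f t < 0 → deriv f t + K * f t ≤ 0)
    {t : ℝ} (ht : a ≤ t) : f t < 0 := by
  by_contra! hft
  set S := {s | a ≤ s ∧ 0 ≤ f s}
  have hS : IsClosed S := isClosed_Ici.inter (isClosed_le continuous_const hf.continuous)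
  have hbdd : BddBelow S := ⟨a, fun s hs ↦ hs.1⟩
  obtain ⟨has, hfs⟩ : sInf S ∈ S := hS.csInf_mem ⟨t, ht, hft⟩ hbdd
  have hbefore : ∀ s ∈ Ioo a (sInf S), f s < 0 := fun s hs ↦
    not_le.1 fun h ↦ hs.2.not_ge (csInf_le hbdd ⟨hs.1.le, h⟩)
  have := hf.exp_mul_le_of_ae_deriv_add_mul_nonpos K has <| by
    filter_upwards [hd] with s hs hsS using hs hsS.1 (hbefore s hsS)
  nlinarith [exp_pos (K * a), exp_pos (K * sInf S)]

theorem deriv_max_eq_left {u v : ℝ → ℝ} {t : ℝ} (hu : DifferentiableAt ℝ u t)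
    (hm : DifferentiableAt ℝ (fun s ↦ max (u s) (v s)) t) (h : v t ≤ u t) :
    deriv (fun s ↦ max (u s) (v s)) t = deriv u t := by
  have hmin : IsLocalMin (fun s ↦ max (u s) (v s) - u s) t :=
    .of_forall fun s ↦ by simp [max_eq_left h]
  rw [← sub_eq_zero, ← deriv_fun_sub hm hu]
  exact hmin.deriv_eq_zero

theorem deriv_max_eq_right {u v : ℝ → ℝ} {t : ℝ} (hv : DifferentiableAt ℝ v t)
    (hm : DifferentiableAt ℝ (fun s ↦ max (u s) (v s)) t) (h : u t ≤ v t) :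
    deriv (fun s ↦ max (u s) (v s)) t = deriv v t := by
  simp_rw [max_comm (u _)] at hm ⊢
  exact deriv_max_eq_left hv hm h

end Calculus

theorem LipschitzWith.abs_sub_le_mul_sub {K : NNReal} {β : ℝ → ℝ} (hβ : LipschitzWith K β)
    {p q : ℝ} (hpq : p ≤ q) : |β q - β p| ≤ K * (q - p) := by
  simpa [Real.dist_eq, abs_of_nonneg (sub_nonneg.2 hpq)] using hβ.dist_le_mul q p

/-- The endpoint dynamics at one instant, for positions `a`, `b` and velocities `a'`, `b'`. The
last field is not part of the dynamics, but holds along solutions: there the length `b - a ≤ ℓc`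
is maximal whenever it is critical, so its derivative vanishes. -/
structure EndpointLaw (ℓc : ℝ) (G H β : ℝ → ℝ) (a b a' b' : ℝ) : Prop where
  length_pos : 0 < b - a
  obstacle : min (a' + G (b - a) - β a) (ℓc - (b - a)) = 0
  velocity_b : b' = H (b - a) - β b
  velocity_eq_of_critical : b - a = ℓc → a' = b'

namespace EndpointLaw

variable {K : NNReal} {ℓc : ℝ} {G H β : ℝ → ℝ} {a b a' b' a₁ b₁ a₁' b₁' a₂ b₂ a₂' b₂' : ℝ}

theorem length_le (h : EndpointLaw ℓc G H β a b a' b') : b - a ≤ ℓc := by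
  linarith [h.obstacle ▸ min_le_right (a' + G (b - a) - β a) (ℓc - (b - a))]

theorem velocity_a_ge (h : EndpointLaw ℓc G H β a b a' b') : β a - G (b - a) ≤ a' := by
  linarith [h.obstacle ▸ min_le_left (a' + G (b - a) - β a) (ℓc - (b - a))]

theorem velocity_a_of_lt (h : EndpointLaw ℓc G H β a b a' b') (hlt : b - a < ℓc) :
    a' = β a - G (b - a) := by
  rcases min_eq_iff.1 h.obstacle with ⟨h0, -⟩ | ⟨h0, -⟩ <;> linarith

theorem sub_velocity_b_le (hH : AntitoneOn H (Ioi 0)) (hβ : LipschitzWith K β)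
    (h₁ : EndpointLaw ℓc G H β a₁ b₁ a₁' b₁') (h₂ : EndpointLaw ℓc G H β a₂ b₂ a₂' b₂')
    (hℓ : b₂ - a₂ ≤ b₁ - a₁) (hb : b₁ ≤ b₂) : b₁' - b₂' ≤ K * (b₂ - b₁) := by
  have hHℓ : H (b₁ - a₁) ≤ H (b₂ - a₂) := hH h₂.length_pos h₁.length_pos hℓ
  have hβb := (abs_le.1 (hβ.abs_sub_le_mul_sub hb)).2
  rw [h₁.velocity_b, h₂.velocity_b]
  linarith

theorem sub_velocity_a_le (hG : AntitoneOn G (Ioi 0)) (hH : AntitoneOn H (Ioi 0))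
    (hβ : LipschitzWith K β)
    (h₁ : EndpointLaw ℓc G H β a₁ b₁ a₁' b₁') (h₂ : EndpointLaw ℓc G H β a₂ b₂ a₂' b₂')
    (hℓ : b₁ - a₁ ≤ b₂ - a₂) (ha : a₁ ≤ a₂) : a₁' - a₂' ≤ K * (a₂ - a₁) := by
  rcases h₁.length_le.lt_or_eq with hlt | hcrit
  · have hGℓ : G (b₂ - a₂) ≤ G (b₁ - a₁) := hG h₁.length_pos h₂.length_pos hℓ
    have hβa := (abs_le.1 (hβ.abs_sub_le_mul_sub ha)).1
    linarith [h₁.velocity_a_of_lt hlt, h₂.velocity_a_ge]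
  · -- both lengths are critical, so both endpoints of each solution move together
    have hcrit₂ : b₂ - a₂ = ℓc := le_antisymm h₂.length_le (hcrit ▸ hℓ)
    have hshift : a₂ - a₁ = b₂ - b₁ := by linarith
    rw [h₁.velocity_eq_of_critical hcrit, h₂.velocity_eq_of_critical hcrit₂, hshift]
    exact sub_velocity_b_le hH hβ h₁ h₂ (by linarith) (by linarith)

end EndpointLaw

theorem ae_endpointLaw_deriv {ℓc : ℝ} {G H β a b : ℝ → ℝ}
    (ha : LocallyLipschitz a) (hb : LocallyLipschitz b) (hpos : ∀ t ≥ 0, 0 < b t - a t)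
    (hdyn : ∀ᵐ t ∂(volume.restrict (Ici (0 : ℝ))),
      min (deriv a t + G (b t - a t) - β (a t)) (ℓc - (b t - a t)) = 0 ∧
        deriv b t = H (b t - a t) - β (b t)) :
    ∀ᵐ t, 0 < t → EndpointLaw ℓc G H β (a t) (b t) (deriv a t) (deriv b t) := by
  have hcont : Continuous fun t ↦ b t - a t := hb.continuous.sub ha.continuous
  -- the a.e. constraint `b - a ≤ ℓc` holds everywhere by continuity
  have hle : EqOn (fun t ↦ min (b t - a t) ℓc) (fun t ↦ b t - a t) (Ioi 0) := by
    refine Measure.eqOn_open_of_ae_eq (μ := volume) ?_ isOpen_Ioi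
      (hcont.min continuous_const).continuousOn hcont.continuousOn
    filter_upwards [ae_restrict_of_ae_restrict_of_subset Ioi_subset_Ici_self hdyn] with t ht
    have h0 := min_le_right (deriv a t + G (b t - a t) - β (a t)) (ℓc - (b t - a t))
    rw [ht.1] at h0
    exact min_eq_left (by linarith)
  filter_upwards [(ae_restrict_iff' measurableSet_Ici).1 hdyn, ha.ae_differentiableAt,
    hb.ae_differentiableAt] with t hdynt hat hbt ht
  obtain ⟨hmin, hvel⟩ := hdynt ht.le
  refine ⟨hpos t ht.le, hmin, hvel, fun hcrit ↦ ?_⟩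
  have hmax : IsLocalMax (fun s ↦ b s - a s) t := by
    filter_upwards [Ioi_mem_nhds ht] with s hs
    exact hcrit ▸ min_eq_left_iff.1 (hle hs)
  linarith [deriv_fun_sub hbt hat ▸ hmax.deriv_eq_zero]

theorem stmt_12_general (K : NNReal) (ℓc : ℝ) (G H β : ℝ → ℝ)
    (a₁ b₁ a₂ b₂ : ℝ → ℝ)
    (hGanti : AntitoneOn G (Set.Ioi 0)) (hHanti : AntitoneOn H (Set.Ioi 0))
    (hβ : LipschitzWith K β)
    (hla₁ : LocallyLipschitz a₁) (hlb₁ : LocallyLipschitz b₁)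
    (hla₂ : LocallyLipschitz a₂) (hlb₂ : LocallyLipschitz b₂)
    (hpos₁ : ∀ t ≥ 0, 0 < b₁ t - a₁ t) (hpos₂ : ∀ t ≥ 0, 0 < b₂ t - a₂ t)
    (hdyn₁ : ∀ᵐ t ∂(volume.restrict (Set.Ici (0 : ℝ))),
      min (deriv a₁ t + G (b₁ t - a₁ t) - β (a₁ t)) (ℓc - (b₁ t - a₁ t)) = 0 ∧
        deriv b₁ t = H (b₁ t - a₁ t) - β (b₁ t))
    (hdyn₂ : ∀ᵐ t ∂(volume.restrict (Set.Ici (0 : ℝ))),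
      min (deriv a₂ t + G (b₂ t - a₂ t) - β (a₂ t)) (ℓc - (b₂ t - a₂ t)) = 0 ∧
        deriv b₂ t = H (b₂ t - a₂ t) - β (b₂ t))
    (ha0 : a₁ 0 < a₂ 0) (hb0 : b₁ 0 < b₂ 0) :
    ∀ t > 0, a₁ t < a₂ t ∧ b₁ t < b₂ t := by
  set f : ℝ → ℝ := fun t ↦ max (a₁ t - a₂ t) (b₁ t - b₂ t)
  have hf : LocallyLipschitz f := (hla₁.sub hla₂).max (hlb₁.sub hlb₂)
  have hkey : ∀ᵐ t, 0 < t → f t < 0 → deriv f t + K * f t ≤ 0 := by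
    filter_upwards [ae_endpointLaw_deriv hla₁ hlb₁ hpos₁ hdyn₁,
      ae_endpointLaw_deriv hla₂ hlb₂ hpos₂ hdyn₂, hla₁.ae_differentiableAt,
      hla₂.ae_differentiableAt, hlb₁.ae_differentiableAt, hlb₂.ae_differentiableAt,
      hf.ae_differentiableAt] with t h₁ h₂ hda₁ hda₂ hdb₁ hdb₂ hdf ht hft
    have hneg := max_lt_iff.1 hft
    rcases le_total (b₁ t - b₂ t) (a₁ t - a₂ t) with hab | hab
    · have hderiv : deriv f t = deriv a₁ t - deriv a₂ t :=
        (deriv_max_eq_left (u := fun s ↦ a₁ s - a₂ s) (hda₁.sub hda₂) hdf hab).trans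
          (deriv_fun_sub hda₁ hda₂)
      rw [hderiv, show f t = a₁ t - a₂ t from max_eq_left hab]
      linarith [(h₁ ht).sub_velocity_a_le hGanti hHanti hβ (h₂ ht)
        (by linarith) (by linarith)]
    · have hderiv : deriv f t = deriv b₁ t - deriv b₂ t :=
        (deriv_max_eq_right (v := fun s ↦ b₁ s - b₂ s) (hdb₁.sub hdb₂) hdf hab).trans
          (deriv_fun_sub hdb₁ hdb₂)
      rw [hderiv, show f t = b₁ t - b₂ t from max_eq_right hab]
      linarith [(h₁ ht).sub_velocity_b_le hHanti hβ (h₂ ht)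
        (by linarith) (by linarith)]
  intro t ht
  have hft := max_lt_iff.1 <|
    hf.neg_of_ae_deriv_add_mul_nonpos K (max_lt (by linarith) (by linarith)) hkey ht.le
  exact ⟨sub_neg.1 hft.1, sub_neg.1 hft.2⟩

/-- Strict comparison principle for the endpoint dynamics. -/
theorem stmt_12 (K : NNReal) (ℓc : ℝ) (G H β : ℝ → ℝ)
    (a₁ b₁ a₂ b₂ : ℝ → ℝ)
    (hℓc : 0 < ℓc)
    (hGanti : AntitoneOn G (Set.Ioi 0)) (hHanti : AntitoneOn H (Set.Ioi 0))
    (hGc : ContinuousOn G (Set.Ioi 0)) (hHc : ContinuousOn H (Set.Ioi 0))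
    (hβ : LipschitzWith K β)
    (hla₁ : LocallyLipschitz a₁) (hlb₁ : LocallyLipschitz b₁)
    (hla₂ : LocallyLipschitz a₂) (hlb₂ : LocallyLipschitz b₂)
    (hpos₁ : ∀ t ≥ 0, 0 < b₁ t - a₁ t) (hpos₂ : ∀ t ≥ 0, 0 < b₂ t - a₂ t)
    (hdyn₁ : ∀ᵐ t ∂(volume.restrict (Set.Ici (0 : ℝ))),
      min (deriv a₁ t + G (b₁ t - a₁ t) - β (a₁ t)) (ℓc - (b₁ t - a₁ t)) = 0 ∧
        deriv b₁ t = H (b₁ t - a₁ t) - β (b₁ t))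
    (hdyn₂ : ∀ᵐ t ∂(volume.restrict (Set.Ici (0 : ℝ))),
      min (deriv a₂ t + G (b₂ t - a₂ t) - β (a₂ t)) (ℓc - (b₂ t - a₂ t)) = 0 ∧
        deriv b₂ t = H (b₂ t - a₂ t) - β (b₂ t))
    (ha0 : a₁ 0 < a₂ 0) (hb0 : b₁ 0 < b₂ 0) :
    ∀ t > 0, a₁ t < a₂ t ∧ b₁ t < b₂ t :=
  stmt_12_general K ℓc G H β a₁ b₁ a₂ b₂ hGanti hHanti hβ hla₁ hlb₁ hla₂ hlb₂ hpos₁ hpos₂ hdyn₁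
    hdyn₂ ha0 hb0
end

section
/- Let β : ℝ → ℝ be continuous, 1-periodic, and let q ∈ [min β, max β]. Then every solution x(t) of x'(t) = q - β(x(t)) satisfies x(t) ∈ [x(0) - 1, x(0) + 1] for all t ≥ 0; in particular the effective speed lim_{t→∞} (x(t) - x(0))/t equals 0. -/
/-!
By periodicity there are points `c ∈ (x₀ - 1, x₀]` and `d ∈ [x₀, x₀ + 1)` with
`β c ≤ q ≤ β d`, where the field `q - β` points into `[c, d]`. A solution of an ODE with a
Lipschitz field cannot cross such a point: compare `c - x` with `ε e^{(K+1)(s - t)}`; at a first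
touching the Lipschitz bound gives `(c - x)' ≤ K (c - x)`, strictly slower than the comparison
function, and `ε → 0` gives `c ≤ x`. A solution bounded for all time has zero effective speed.
-/

open Real Set Filter

theorem le_solution_of_lipschitz_of_nonneg {F x : ℝ → ℝ} {K : NNReal} {c t₀ : ℝ}
    (hF : LipschitzWith K F) (hFc : 0 ≤ F c) (h₀ : c ≤ x t₀)
    (hx : ∀ t ≥ t₀, HasDerivAt x (F (x t)) t) :
    ∀ t ≥ t₀, c ≤ x t := by
  intro t ht
  refine le_of_forall_pos_le_add fun ε hε => ?_
  set B : ℝ → ℝ := fun s => ε * exp ((K + 1) * (s - t))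
  have hB_pos : ∀ s, 0 < B s := fun s => by positivity
  have hB_deriv : ∀ s, HasDerivAt B (B s * (K + 1)) s := fun s => by
    have := (((hasDerivAt_id' s).sub_const t).const_mul ((K : ℝ) + 1)).exp.const_mul ε
    exact this.congr_deriv (by simp only [B]; ring)
  have hcx_cont : ContinuousOn (fun s => c - x s) (Icc t₀ t) := fun s hs =>
    (hx s hs.1).continuousAt.continuousWithinAt.const_sub c
  have key := image_le_of_deriv_right_lt_deriv_boundary' hcx_cont
    (fun s hs => ((hx s hs.1).const_sub c).hasDerivWithinAt)
    ((sub_nonpos.2 h₀).trans (hB_pos t₀).le)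
    (fun s _ => (hB_deriv s).continuousAt.continuousWithinAt)
    (fun s _ => (hB_deriv s).hasDerivWithinAt)
    (fun s _ hs => ?_) ⟨ht, le_rfl⟩
  · simp only [B, sub_self, mul_zero, exp_zero, mul_one] at key
    linarith
  · have hxs : x s < c := by linarith [hB_pos s]
    have hLip : F c - F (x s) ≤ K * (c - x s) := by
      have := hF.dist_le_mul c (x s)
      rw [Real.dist_eq, Real.dist_eq, abs_of_pos (sub_pos.2 hxs)] at this
      exact (le_abs_self _).trans this
    calc -F (x s) ≤ K * (c - x s) := by linarith
      _ = K * B s := by rw [hs]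
      _ < B s * (K + 1) := by linarith [hB_pos s]

theorem solution_le_of_lipschitz_of_nonpos {F x : ℝ → ℝ} {K : NNReal} {c t₀ : ℝ}
    (hF : LipschitzWith K F) (hFc : F c ≤ 0) (h₀ : x t₀ ≤ c)
    (hx : ∀ t ≥ t₀, HasDerivAt x (F (x t)) t) :
    ∀ t ≥ t₀, x t ≤ c := by
  have hF' : LipschitzWith K fun y => -F (-y) := by
    simpa [Function.comp_def] using (LipschitzWith.id.neg.comp (hF.comp LipschitzWith.id.neg))
  have := le_solution_of_lipschitz_of_nonneg (x := fun t => -x t) (c := -c) hF'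
    (by simpa using hFc) (by simpa using h₀) (fun t ht => by simpa using (hx t ht).fun_neg)
  exact fun t ht => neg_le_neg_iff.1 (this t ht)

theorem mem_Icc_of_periodic_of_hasDerivAt {β x : ℝ → ℝ} {K : NNReal} {p q t₀ : ℝ}
    (hβ : LipschitzWith K β) (hper : Function.Periodic β p) (hp : 0 < p)
    (hq₁ : ∃ s, β s ≤ q) (hq₂ : ∃ s, q ≤ β s)
    (hx : ∀ t ≥ t₀, HasDerivAt x (q - β (x t)) t) :
    ∀ t ≥ t₀, x t ∈ Icc (x t₀ - p) (x t₀ + p) := by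
  obtain ⟨s₁, hs₁⟩ := hq₁
  obtain ⟨s₂, hs₂⟩ := hq₂
  obtain ⟨c, ⟨hc_gt, hc_le⟩, hβc⟩ := hper.exists_mem_Ioc hp s₁ (x t₀ - p)
  obtain ⟨d, ⟨hd_ge, hd_lt⟩, hβd⟩ := hper.exists_mem_Ico hp s₂ (x t₀)
  have hF : LipschitzWith K fun y => q - β y := by
    simpa using (LipschitzWith.const q).sub hβ
  intro t ht
  have hlow := le_solution_of_lipschitz_of_nonneg hF (sub_nonneg.2 (hβc ▸ hs₁))
    (by linarith) hx t ht
  have hupp := solution_le_of_lipschitz_of_nonpos hF (sub_nonpos.2 (hβd ▸ hs₂)) hd_ge hx t ht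
  constructor <;> linarith

theorem stmt_13_general (β : ℝ → ℝ) (K : NNReal) (q : ℝ) (x : ℝ → ℝ)
    (hβl : LipschitzWith K β) (hper : Function.Periodic β 1)
    (hq₁ : ∃ s, β s ≤ q) (hq₂ : ∃ s, q ≤ β s)
    (hx : ∀ t ≥ 0, HasDerivAt x (q - β (x t)) t) :
    (∀ t ≥ 0, x t ∈ Set.Icc (x 0 - 1) (x 0 + 1)) ∧
      Filter.Tendsto (fun t => (x t - x 0) / t) Filter.atTop (nhds 0) := by
  have htrap := mem_Icc_of_periodic_of_hasDerivAt hβl hper one_pos hq₁ hq₂ hx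
  have hbdd : IsBoundedUnder (· ≤ ·) atTop (norm ∘ fun t => x t - x 0) :=
    isBoundedUnder_of_eventually_le (a := 1) <| (eventually_ge_atTop 0).mono fun t ht => by
      have := htrap t ht
      simp only [Function.comp_apply, Real.norm_eq_abs, abs_le, mem_Icc] at this ⊢
      constructor <;> linarith
  exact ⟨htrap, by simpa only [div_eq_mul_inv] using
    isBoundedUnder_le_mul_tendsto_zero hbdd tendsto_inv_atTop_zero⟩

/-- Pinning: for q in [min β, max β] any solution of x' = q - β(x) is trapped and has
zero effective speed. -/
theorem stmt_13 (β : ℝ → ℝ) (K : NNReal) (q : ℝ) (x : ℝ → ℝ)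
    (hβc : Continuous β) (hβl : LipschitzWith K β) (hper : Function.Periodic β 1)
    (hq₁ : ∃ s, β s ≤ q) (hq₂ : ∃ s, q ≤ β s)
    (hx : ∀ t ≥ 0, HasDerivAt x (q - β (x t)) t) :
    (∀ t ≥ 0, x t ∈ Set.Icc (x 0 - 1) (x 0 + 1)) ∧
      Filter.Tendsto (fun t => (x t - x 0) / t) Filter.atTop (nhds 0) :=
  stmt_13_general β K q x hβl hper hq₁ hq₂ hx
end

section
/- Let β : ℝ → ℝ be Lipschitz and 1-periodic, and let q > max β. Then the solution of x'(t) = q - β(x(t)) with x(0) = 0 is strictly increasing with x'(t) ≥ q - max β > 0, there is a unique t_c > 0 with x(t_c) = 1, the solution satisfies x(t + t_c) = x(t) + 1 for all t, and lim_{t→∞} x(t)/t = 1/t_c. -/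
/-!
The speed `q - β (x t)` is at least `q - M > 0`, so `x` is strictly increasing and grows at least
linearly; by the intermediate value theorem it reaches `1` at some `tc > 0`, uniquely by strict
monotonicity. Since the vector field `z ↦ q - β z` is `1`-periodic, `t ↦ x (t + tc) - 1` solves the
same Lipschitz ODE with the same initial value, so it equals `x`. Finally `x t - t / tc` is continuous
and `tc`-periodic, hence bounded, which gives `x t / t → 1 / tc`.
-/

open Set Filter Topology

theorem exists_pos_eq_add_of_mul_le_sub {x : ℝ → ℝ} {c a : ℝ} (hx : Continuous x) (hc : 0 < c)
    (hgrow : ∀ t, 0 ≤ t → c * t ≤ x t - x 0) (ha : 0 < a) : ∃ T, 0 < T ∧ x T = x 0 + a := by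
  have hT : 0 ≤ a / c := (div_pos ha hc).le
  have hreach : x 0 + a ≤ x (a / c) := by
    have := hgrow (a / c) hT
    rw [mul_div_cancel₀ a hc.ne'] at this
    linarith
  obtain ⟨T, hT_mem, hxT⟩ :=
    intermediate_value_Icc hT hx.continuousOn ⟨le_add_of_nonneg_right ha.le, hreach⟩
  refine ⟨T, hT_mem.1.lt_of_ne ?_, hxT⟩
  rintro rfl
  linarith

theorem add_period_of_hasDerivAt_of_periodic {E : Type*} [NormedAddCommGroup E] [NormedSpace ℝ E]
    {v : E → E} {K : NNReal} {p : E} {x : ℝ → E} {T : ℝ} (hv : LipschitzWith K v)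
    (hper : Function.Periodic v p) (hx : ∀ t, HasDerivAt x (v (x t)) t) (hT : x T = x 0 + p)
    (t : ℝ) : x (t + T) = x t + p := by
  have hshift : ∀ s, HasDerivAt (fun s => x (s + T) - p) (v (x (s + T) - p)) s := fun s => by
    rw [← hper (x (s + T) - p), sub_add_cancel]
    exact ((hx (s + T)).comp_add_const s T).sub_const p
  have heq := ODE_solution_unique_univ (v := fun _ => v) (s := fun _ => univ) (t₀ := 0)
    (fun _ => hv.lipschitzOnWith) (fun s => ⟨hshift s, trivial⟩) (fun s => ⟨hx s, trivial⟩)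
    (by simp [hT])
  exact sub_eq_iff_eq_add.1 (by simpa using congrFun heq t)

theorem tendsto_div_atTop_of_add_period {x : ℝ → ℝ} {T p : ℝ} (hx : Continuous x) (hT : 0 < T)
    (hshift : ∀ t, x (t + T) = x t + p) :
    Tendsto (fun t => x t / t) atTop (𝓝 (p / T)) := by
  set g : ℝ → ℝ := fun t => x t - p / T * t
  have hg_per : Function.Periodic g T := fun t => by
    simp only [g, hshift, mul_add, div_mul_cancel₀ p hT.ne']
    ring
  have hg_bdd : IsBoundedUnder (· ≤ ·) atTop (norm ∘ g) := by
    obtain ⟨C, hC⟩ := isBounded_iff_forall_norm_le.1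
      (hg_per.isBounded_of_continuous hT.ne' (by fun_prop))
    exact isBoundedUnder_of ⟨C, fun t => hC _ (mem_range_self t)⟩
  have hdecay : Tendsto (fun t => t⁻¹ * g t) atTop (𝓝 0) :=
    tendsto_inv_atTop_zero.zero_mul_isBoundedUnder_le hg_bdd
  have := hdecay.add_const (p / T)
  rw [zero_add] at this
  refine this.congr' ?_
  filter_upwards [eventually_ne_atTop 0] with t ht
  simp only [g]
  field_simp
  ring

/-- For q > max β, the solution of x' = q - β(x), x(0) = 0 is strictly increasing,
crosses 1 at a unique time `tc`, is space-time periodic, and has effective speed 1/tc. -/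
theorem stmt_14 (β : ℝ → ℝ) (K : NNReal) (q M : ℝ) (x : ℝ → ℝ)
    (hβl : LipschitzWith K β) (hper : Function.Periodic β 1)
    (hM : IsGreatest (Set.range β) M) (hq : M < q)
    (hx : ∀ t, HasDerivAt x (q - β (x t)) t) (hx0 : x 0 = 0) :
    StrictMono x ∧ (∀ t, q - M ≤ q - β (x t)) ∧ 0 < q - M ∧
      ∃ tc, 0 < tc ∧ x tc = 1 ∧ (∀ s, 0 < s → x s = 1 → s = tc) ∧
        (∀ t, x (t + tc) = x t + 1) ∧
        Filter.Tendsto (fun t => x t / t) Filter.atTop (nhds (1 / tc)) := by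
  have hbnd : ∀ t, q - M ≤ q - β (x t) := fun t => sub_le_sub_left (hM.2 ⟨x t, rfl⟩) q
  have hqM : 0 < q - M := sub_pos.2 hq
  have hmono : StrictMono x := strictMono_of_hasDerivAt_pos hx fun t => hqM.trans_le (hbnd t)
  have hdiff : Differentiable ℝ x := fun t => (hx t).differentiableAt
  have hgrow : ∀ t, 0 ≤ t → (q - M) * t ≤ x t - x 0 := fun t ht => by
    simpa using mul_sub_le_image_sub_of_le_deriv hdiff (fun s => (hx s).deriv ▸ hbnd s) ht
  obtain ⟨tc, htc_pos, htc⟩ :=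
    exists_pos_eq_add_of_mul_le_sub hdiff.continuous hqM hgrow one_pos
  rw [hx0, zero_add] at htc
  have hshift : ∀ t, x (t + tc) = x t + 1 :=
    add_period_of_hasDerivAt_of_periodic ((LipschitzWith.const q).sub hβl)
      (fun z => by simp only [hper z]) hx (by rw [htc, hx0, zero_add])
  exact ⟨hmono, hbnd, hqM, tc, htc_pos, htc, fun s _ hs => hmono.injective (hs.trans htc.symm),
    hshift, tendsto_div_atTop_of_add_period hdiff.continuous htc_pos hshift⟩
end

section
/- Let β : ℝ → ℝ be Lipschitz with constant K and 1-periodic, and let max β < q₁ < q₂. Let r(qᵢ) = 1/t_c(qᵢ) be the effective speeds defined as in the previous statement. Then r(q₁) ≤ r(q₂), and moreover r(q₂) ≤ r(q₁) + C (q₂ - q₁) for a constant C depending only on K, q₁ - max β, and r(q₁). In particular q ↦ r(q) is locally Lipschitz on (max β, ∞). -/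
open Real Set

/-! Since `q₁ < q₂`, the solution `y` can never be overtaken by `x`, so `y` reaches `1` first:
`t₂ ≤ t₁`. Grönwall's inequality bounds the gap `y - x` at time `t₂` by
`(q₂ - q₁) t₁ e^{K t₁}`, and `x`, moving with speed at least `δ = q₁ - max β`, closes this gap
within time `gap / δ`; this bounds `1/t₂ - 1/t₁` linearly in `q₂ - q₁` for `q₂ - q₁ ≤ 1`.
For larger `q₂ - q₁` it suffices that `y` moves with speed at most `q₂ - min β ≤ q₂ - max β + K`,
as a `K`-Lipschitz `1`-periodic function stays within `K` of its maximum. -/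

theorem Function.Periodic.sub_mul_le_of_lipschitzWith {β : ℝ → ℝ} {c M : ℝ} {K : NNReal}
    (hper : Function.Periodic β c) (hc : 0 < c) (hβ : LipschitzWith K β)
    (hM : IsGreatest (range β) M) (s : ℝ) : M - K * c ≤ β s := by
  obtain ⟨a, rfl⟩ := hM.1
  obtain ⟨y, ⟨hay, hya⟩, hsy⟩ := hper.exists_mem_Ico hc s a
  have hdist : dist y a ≤ c := by
    rw [Real.dist_eq, abs_of_nonneg (by linarith)]
    linarith
  calc β a - K * c ≤ β a - K * dist y a := by gcongr
    _ ≤ β a - dist (β a) (β y) := by rw [dist_comm y a]; linarith [hβ.dist_le_mul a y]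
    _ ≤ β s := by rw [hsy]; linarith [Real.sub_le_dist (β a) (β y)]

theorem ODE_solution_le_of_lt {f g x y : ℝ → ℝ} (hfg : ∀ z, f z < g z)
    (hx : ∀ t, HasDerivAt x (f (x t)) t) (hy : ∀ t, HasDerivAt y (g (y t)) t)
    {a b : ℝ} (ha : x a ≤ y a) (hab : a ≤ b) : x b ≤ y b :=
  image_le_of_deriv_right_lt_deriv_boundary (fun t _ => (hx t).continuousAt.continuousWithinAt)
    (fun t _ => (hx t).hasDerivWithinAt) ha hy (fun t _ hxy => hxy ▸ hfg (x t)) ⟨hab, le_rfl⟩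

theorem Real.exp_sub_one_le_mul_exp (u : ℝ) : exp u - 1 ≤ u * exp u := by
  have h := mul_le_mul_of_nonneg_right (add_one_le_exp (-u)) (exp_pos u).le
  rw [← exp_add, neg_add_cancel, exp_zero] at h
  linarith

theorem gronwallBound_zero_le {K ε t : ℝ} (hK : 0 ≤ K) (hε : 0 ≤ ε) :
    gronwallBound 0 K ε t ≤ ε * t * exp (K * t) := by
  rcases hK.eq_or_lt with rfl | hK
  · simp [gronwallBound_K0]
  simp only [gronwallBound_of_K_ne_0 hK.ne', zero_mul, zero_add]
  calc ε / K * (exp (K * t) - 1) ≤ ε / K * (K * t * exp (K * t)) := by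
        gcongr; exact exp_sub_one_le_mul_exp _
    _ = ε * t * exp (K * t) := by field_simp

theorem abs_sub_le_of_hasDerivAt_const_sub {β x y : ℝ → ℝ} {K : NNReal} {q₁ q₂ t : ℝ}
    (hβ : LipschitzWith K β) (hx : ∀ t, HasDerivAt x (q₁ - β (x t)) t)
    (hy : ∀ t, HasDerivAt y (q₂ - β (y t)) t) (h0 : x 0 = y 0) (ht : 0 ≤ t) :
    |x t - y t| ≤ |q₂ - q₁| * t * exp (K * t) := by
  have hv : LipschitzWith K fun z => q₁ - β z :=
    LipschitzWith.of_dist_le_mul fun a b => by rw [dist_sub_left]; exact hβ.dist_le_mul a b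
  have h := dist_le_of_approx_trajectories_ODE (v := fun _ => fun z => q₁ - β z) (δ := 0)
    (fun _ => hv) (fun t _ => (hx t).continuousAt.continuousWithinAt)
    (fun t _ => (hx t).hasDerivWithinAt) (fun _ _ => (dist_self _).le)
    (fun t _ => (hy t).continuousAt.continuousWithinAt)
    (fun t _ => (hy t).hasDerivWithinAt) (fun t _ => (dist_sub_right _ _ _).le)
    (by rw [h0, dist_self]) t ⟨ht, le_rfl⟩
  rw [zero_add, sub_zero] at h
  rw [← Real.dist_eq, ← Real.dist_eq]
  exact h.trans (gronwallBound_zero_le K.2 (abs_nonneg _))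

theorem one_div_le_one_div_add_of_gap {t₁ t₂ δ D K E : ℝ} (ht₂ : 0 < t₂) (ht₂₁ : t₂ ≤ t₁)
    (hδ : 0 < δ) (hD : 0 ≤ D) (hK : 0 ≤ K) (hE : 0 ≤ E)
    (hgap : δ * (t₁ - t₂) ≤ D * t₁ * E) (hspeed : 1 ≤ (D + δ + K) * t₂) :
    1 / t₂ ≤ 1 / t₁ + (1 + δ + K) * (E / δ + 1) * D := by
  have ht₁ : 0 < t₁ := ht₂.trans_le ht₂₁
  have hC : (1 + δ + K) * (E / δ + 1) * D = D * E / δ * (1 + δ + K) + D * (1 + δ + K) := by ring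
  have hinv : 1 / t₂ ≤ D + δ + K := by rw [div_le_iff₀ ht₂]; linarith
  -- `hgap` only gives a bound quadratic in `D`, since `1 / t₂` may itself grow like `D`.
  rcases le_total D 1 with hD1 | hD1
  · have hrel : (t₁ - t₂) / t₁ ≤ D * E / δ := by
      rw [div_le_div_iff₀ ht₁ hδ]; linarith
    calc 1 / t₂ = 1 / t₁ + (t₁ - t₂) / t₁ * (1 / t₂) := by field_simp; ring
      _ ≤ 1 / t₁ + D * E / δ * (1 + δ + K) := by
          gcongr
          linarith
      _ ≤ _ := by rw [hC]; linarith [mul_nonneg hD (by linarith : 0 ≤ 1 + δ + K)]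
  · calc 1 / t₂ ≤ D + δ + K := hinv
      _ ≤ D * (1 + δ + K) := by nlinarith
      _ ≤ _ := by
          rw [hC]
          linarith [one_div_pos.2 ht₁, (by positivity : 0 ≤ D * E / δ * (1 + δ + K))]

theorem stmt_15_general (K : NNReal) (δ r₁ : ℝ) (hδ : 0 < δ) :
    ∃ C > 0, ∀ (β : ℝ → ℝ) (q₁ q₂ M : ℝ) (x y : ℝ → ℝ) (t₁ t₂ : ℝ),
      LipschitzWith K β → Function.Periodic β 1 → IsGreatest (Set.range β) M →
      M < q₁ → q₁ < q₂ → q₁ - M = δ →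
      (∀ t, HasDerivAt x (q₁ - β (x t)) t) → x 0 = 0 →
      (∀ t, HasDerivAt y (q₂ - β (y t)) t) → y 0 = 0 →
      0 < t₁ → x t₁ = 1 → 0 < t₂ → y t₂ = 1 → 1 / t₁ = r₁ →
      1 / t₁ ≤ 1 / t₂ ∧ 1 / t₂ ≤ 1 / t₁ + C * (q₂ - q₁) := by
  refine ⟨(1 + δ + K) * (exp (K / r₁) / δ + 1), by positivity, ?_⟩
  intro β q₁ q₂ M x y t₁ t₂ hβ hper hM _ hq hδM hx hx0 hy hy0 _ hxt₁ ht₂ hyt₂ hr₁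
  have hxy0 : x 0 = y 0 := hx0.trans hy0.symm
  have hx' : ∀ t, δ ≤ deriv x t := fun t => by
    rw [(hx t).deriv]; linarith [hM.2 (mem_range_self (x t))]
  have hxy : x t₂ ≤ y t₂ := ODE_solution_le_of_lt (f := (q₁ - β ·)) (g := (q₂ - β ·))
    (fun z => by linarith) hx hy hxy0.le ht₂.le
  have ht₂₁ : t₂ ≤ t₁ :=
    (strictMono_of_deriv_pos fun t => hδ.trans_le (hx' t)).le_iff_le.1 (by linarith)
  refine ⟨one_div_le_one_div_of_le ht₂ ht₂₁, ?_⟩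
  have hgap : δ * (t₁ - t₂) ≤ (q₂ - q₁) * t₁ * exp (K / r₁) := by
    have hdiff := abs_sub_le_of_hasDerivAt_const_sub hβ hx hy hxy0 ht₂.le
    rw [abs_of_pos (sub_pos.2 hq)] at hdiff
    calc δ * (t₁ - t₂) ≤ x t₁ - x t₂ :=
          mul_sub_le_image_sub_of_le_deriv (fun t => (hx t).differentiableAt) hx' ht₂₁
      _ ≤ |x t₂ - y t₂| := by rw [hxt₁, ← hyt₂, abs_sub_comm]; exact le_abs_self _
      _ ≤ (q₂ - q₁) * t₂ * exp (K * t₂) := hdiff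
      _ ≤ (q₂ - q₁) * t₁ * exp (K / r₁) := by
          rw [← hr₁, div_div_eq_mul_div, div_one]; gcongr
  have hspeed : 1 ≤ (q₂ - q₁ + δ + K) * t₂ := by
    have h := image_sub_le_mul_sub_of_deriv_le (fun t => (hy t).differentiableAt)
      (C := q₂ - q₁ + δ + K) (fun t => by
        rw [(hy t).deriv]
        linarith [hper.sub_mul_le_of_lipschitzWith one_pos hβ hM (y t)]) ht₂.le
    rwa [hyt₂, hy0, sub_zero, sub_zero] at h
  exact one_div_le_one_div_add_of_gap ht₂ ht₂₁ hδ (sub_pos.2 hq).le K.2 (exp_pos _).le hgap hspeed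

/-- Monotonicity and local Lipschitz regularity of the effective speed r(q) = 1/t_c
for q > max β, with a constant depending only on the Lipschitz constant K of β,
on δ = q₁ - max β and on r₁ = r(q₁). -/
theorem stmt_15 (K : NNReal) (δ r₁ : ℝ) (hδ : 0 < δ) (hr₁ : 0 < r₁) :
    ∃ C > 0, ∀ (β : ℝ → ℝ) (q₁ q₂ M : ℝ) (x y : ℝ → ℝ) (t₁ t₂ : ℝ),
      LipschitzWith K β → Function.Periodic β 1 → IsGreatest (Set.range β) M →
      M < q₁ → q₁ < q₂ → q₁ - M = δ →
      (∀ t, HasDerivAt x (q₁ - β (x t)) t) → x 0 = 0 →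
      (∀ t, HasDerivAt y (q₂ - β (y t)) t) → y 0 = 0 →
      0 < t₁ → x t₁ = 1 → 0 < t₂ → y t₂ = 1 → 1 / t₁ = r₁ →
      1 / t₁ ≤ 1 / t₂ ∧ 1 / t₂ ≤ 1 / t₁ + C * (q₂ - q₁) :=
  stmt_15_general K δ r₁ hδ
end

section
/- Let β : ℝ → ℝ be C², 1-periodic, attaining its maximum q₀ = β(0) at 0, with β(x) ≥ q₀ - C₀ x² for all x. For q > q₀ set η = q - q₀ and let x(t) solve x' = q - β(x), x(0) = 0. Then the time t_c with x(t_c) = 1 satisfies 1/t_c ≤ C (η + √η) for a constant C depending only on C₀; hence r(q) ≤ C (q - q₀)^{1/2} for q near q₀, and r is continuous at q₀ with r(q₀) = 0. -/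
/-!
Since β ≤ q₀, the solution is nondecreasing, and while `0 ≤ x ≤ δ := min 1 √η` its speed is
`q - β x ≤ η + C₀ x² ≤ (1 + C₀) η`. Hence reaching `δ ≤ 1` already takes time at least
`δ / ((1 + C₀) η)`, and `η / min 1 √η = max η √η ≤ η + √η`.
-/

open Real Set

theorem le_mul_of_hasDerivAt_autonomous_of_le {x v : ℝ → ℝ} {K δ T : ℝ}
    (hx : ∀ t, HasDerivAt x (v (x t)) t) (hv : ∀ y, 0 ≤ v y)
    (hvK : ∀ y ∈ Icc (x 0) (x 0 + δ), v y ≤ K) (hδ : 0 ≤ δ) (hT : 0 ≤ T)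
    (hreach : x 0 + δ ≤ x T) : δ ≤ K * T := by
  have hdiff : Differentiable ℝ x := fun t => (hx t).differentiableAt
  have hmono : Monotone x :=
    monotone_of_deriv_nonneg hdiff fun t => (hx t).deriv ▸ hv (x t)
  obtain ⟨t₁, ⟨ht₁0, ht₁T⟩, hxt₁⟩ : ∃ t₁ ∈ Icc 0 T, x t₁ = x 0 + δ :=
    intermediate_value_Icc hT hdiff.continuous.continuousOn
      ⟨le_add_of_nonneg_right hδ, hreach⟩
  have hK : 0 ≤ K := (hv (x 0)).trans (hvK _ ⟨le_rfl, le_add_of_nonneg_right hδ⟩)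
  have hgrowth : x t₁ - x 0 ≤ K * (t₁ - 0) := by
    refine (convex_Icc 0 t₁).image_sub_le_mul_sub_of_deriv_le
      hdiff.continuous.continuousOn hdiff.differentiableOn (fun t ht => ?_)
      0 (left_mem_Icc.2 ht₁0) t₁ (right_mem_Icc.2 ht₁0) ht₁0
    rw [interior_Icc] at ht
    rw [(hx t).deriv]
    exact hvK _ ⟨hmono ht.1.le, hxt₁ ▸ hmono ht.2.le⟩
  calc δ = x t₁ - x 0 := by rw [hxt₁]; ring
    _ ≤ K * t₁ := by simpa using hgrowth
    _ ≤ K * T := mul_le_mul_of_nonneg_left ht₁T hK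

theorem div_min_one_sqrt_le {η : ℝ} (hη : 0 ≤ η) : η / min 1 √η ≤ η + √η := by
  rcases le_total 1 √η with h | h
  · rw [min_eq_left h, div_one]
    linarith [sqrt_nonneg η]
  · rw [min_eq_right h, div_sqrt]
    linarith

/-- Near the depinning threshold of a C² medium, the effective speed r(q) = 1/t_c
vanishes at least like a square root: 1/t_c ≤ C(η + √η) with η = q - q₀. -/
theorem stmt_16 (C₀ : ℝ) (hC₀ : 0 < C₀) :
    ∃ C > 0, ∀ (β : ℝ → ℝ) (q₀ q : ℝ) (x : ℝ → ℝ) (tc : ℝ),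
      ContDiff ℝ 2 β → Function.Periodic β 1 →
      β 0 = q₀ → IsGreatest (Set.range β) q₀ →
      (∀ s, q₀ - C₀ * s ^ 2 ≤ β s) →
      q₀ < q →
      (∀ t, HasDerivAt x (q - β (x t)) t) → x 0 = 0 →
      0 < tc → x tc = 1 →
      1 / tc ≤ C * ((q - q₀) + Real.sqrt (q - q₀)) := by
  refine ⟨1 + C₀, by positivity, ?_⟩
  intro β q₀ q x tc _ _ _ hmax hlow hq hx hx0 htc hxtc
  set η := q - q₀
  have hη : 0 < η := sub_pos.2 hq
  set δ := min 1 √η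
  have hδ : 0 < δ := lt_min one_pos (sqrt_pos.2 hη)
  have hspeed : ∀ y ∈ Icc (x 0) (x 0 + δ), q - β y ≤ (1 + C₀) * η := by
    rintro y ⟨hy0, hyδ⟩
    rw [hx0] at hy0
    rw [hx0, zero_add] at hyδ
    have hy2 : y ^ 2 ≤ η := (le_sqrt hy0 hη.le).1 (hyδ.trans (min_le_right _ _))
    nlinarith [hlow y]
  have htime : δ ≤ (1 + C₀) * η * tc :=
    le_mul_of_hasDerivAt_autonomous_of_le hx
      (fun y => sub_nonneg.2 ((hmax.2 (mem_range_self y)).trans hq.le)) hspeed hδ.le htc.le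
      (by rw [hx0, hxtc, zero_add]; exact min_le_left _ _)
  calc 1 / tc ≤ (1 + C₀) * η / δ := by rw [div_le_div_iff₀ htc hδ]; linarith
    _ = (1 + C₀) * (η / δ) := mul_div_assoc _ _ _
    _ ≤ (1 + C₀) * (η + √η) := by gcongr; exact div_min_one_sqrt_le hη.le
end

section
/- Let 𝓕 : ℝ × (0, ℓ_c] → ℝ be continuous, Lipschitz in the second variable, and 1-periodic in the first variable. Let y : [0, ∞) → (0, ℓ_c] be a bounded solution of the ODE-with-constraint max{y'(x) - 𝓕(x, y(x)), y(x) - ℓ_c} = 0 such that solutions satisfy the comparison principle (y₁(0) ≤ y₂(0) implies y₁ ≤ y₂). Then the sequence of translates y_n(x) := y(x + n), n ∈ ℕ, is monotone in n and converges pointwise to a 1-periodic function z(x). -/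
/-!
Since `𝓕` is 1-periodic, `x ↦ y (x + 1)` solves the same constrained ODE. Comparing it with `y`
at `x = 0` gives `y ≤ y (· + 1)` or `y (· + 1) ≤ y` on `[0, ∞)`, so every sequence of translates
`n ↦ y (x + n)` is monotone in the same direction; being trapped in `(0, ℓ_c]`, it converges. The
limit `w` satisfies `w (x + 1) = w x`, so `z x := w (fract x)` is the periodic profile.
-/

open Real Set Filter Topology

def IsConstrainedSolution (F : ℝ → ℝ → ℝ) (ℓc : ℝ) (y dy : ℝ → ℝ) : Prop :=
  ∀ s ≥ 0, HasDerivAt y (dy s) s ∧ max (dy s - F s (y s)) (y s - ℓc) = 0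

theorem IsConstrainedSolution.comp_add_one {F : ℝ → ℝ → ℝ} {ℓc : ℝ} {y dy : ℝ → ℝ}
    (hFper : ∀ s ℓ, F (s + 1) ℓ = F s ℓ) (hy : IsConstrainedSolution F ℓc y dy) :
    IsConstrainedSolution F ℓc (fun t => y (t + 1)) (fun t => dy (t + 1)) := by
  intro s hs
  obtain ⟨hderiv, hode⟩ := hy (s + 1) (by linarith)
  refine ⟨hderiv.comp_add_const s 1, ?_⟩
  rwa [hFper] at hode

section Translates

variable {β : Type*} [Preorder β] {y : ℝ → β}

theorem monotone_translates_of_le_comp_add_one (h : ∀ s ≥ 0, y s ≤ y (s + 1)) {s : ℝ}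
    (hs : 0 ≤ s) : Monotone fun n : ℕ => y (s + n) :=
  monotone_nat_of_le_succ fun n => by
    simpa [add_assoc] using h (s + n) (by positivity)

theorem antitone_translates_of_comp_add_one_le (h : ∀ s ≥ 0, y (s + 1) ≤ y s) {s : ℝ}
    (hs : 0 ≤ s) : Antitone fun n : ℕ => y (s + n) :=
  antitone_nat_of_succ_le fun n => by
    simpa [add_assoc] using h (s + n) (by positivity)

end Translates

theorem Real.exists_tendsto_of_monotone_or_antitone {a : ℕ → ℝ} {m M : ℝ}
    (ha : Monotone a ∨ Antitone a) (hbd : ∀ n, a n ∈ Icc m M) :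
    ∃ l, Tendsto a atTop (𝓝 l) := by
  rcases ha with ha | ha
  · exact ⟨_, tendsto_atTop_ciSup ha ⟨M, forall_mem_range.2 fun n => (hbd n).2⟩⟩
  · exact ⟨_, tendsto_atTop_ciInf ha ⟨m, forall_mem_range.2 fun n => (hbd n).1⟩⟩

theorem exists_periodic_limit_of_tendsto_translates {α : Type*} [TopologicalSpace α]
    {y : ℝ → α} (h : ∀ s ≥ 0, ∃ l, Tendsto (fun n : ℕ => y (s + n)) atTop (𝓝 l)) :
    ∃ z : ℝ → α, Function.Periodic z 1 ∧
      ∀ s ≥ 0, Tendsto (fun n : ℕ => y (s + n)) atTop (𝓝 (z s)) := by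
  have : Nonempty α := ⟨y 0⟩
  choose! w hw using h
  refine ⟨fun s => w (Int.fract s), fun s => by simp only [Int.fract_add_one], fun s hs => ?_⟩
  have hsplit : ∀ n : ℕ, s + n = Int.fract s + ↑(n + ⌊s⌋₊) := fun n => by
    rw [Nat.cast_add, natCast_floor_eq_intCast_floor hs, Int.fract]
    ring
  simp_rw [hsplit]
  exact (hw _ (Int.fract_nonneg s)).comp (tendsto_add_atTop_nat ⌊s⌋₊)

theorem stmt_17_general (ℓc : ℝ) (F : ℝ → ℝ → ℝ) (y dy : ℝ → ℝ)
    (hFper : ∀ s ℓ, F (s + 1) ℓ = F s ℓ)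
    (hybd : ∀ s ≥ 0, y s ∈ Set.Ioc 0 ℓc)
    (hy : ∀ s ≥ 0, HasDerivAt y (dy s) s ∧ max (dy s - F s (y s)) (y s - ℓc) = 0)
    (hcomp : ∀ (y₁ y₂ dy₁ dy₂ : ℝ → ℝ),
      (∀ s ≥ 0, y₁ s ∈ Set.Ioc 0 ℓc) → (∀ s ≥ 0, y₂ s ∈ Set.Ioc 0 ℓc) →
      (∀ s ≥ 0, HasDerivAt y₁ (dy₁ s) s ∧ max (dy₁ s - F s (y₁ s)) (y₁ s - ℓc) = 0) →
      (∀ s ≥ 0, HasDerivAt y₂ (dy₂ s) s ∧ max (dy₂ s - F s (y₂ s)) (y₂ s - ℓc) = 0) →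
      y₁ 0 ≤ y₂ 0 → ∀ s ≥ 0, y₁ s ≤ y₂ s) :
    ((∀ s ≥ 0, Monotone fun n : ℕ => y (s + n)) ∨
        (∀ s ≥ 0, Antitone fun n : ℕ => y (s + n))) ∧
      ∃ z : ℝ → ℝ, Function.Periodic z 1 ∧
        ∀ s ≥ 0, Filter.Tendsto (fun n : ℕ => y (s + n)) Filter.atTop (nhds (z s)) := by
  have hybd₁ : ∀ s ≥ 0, y (s + 1) ∈ Ioc 0 ℓc := fun s hs => hybd (s + 1) (by linarith)
  have hy₁ := IsConstrainedSolution.comp_add_one hFper hy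
  have hmono : (∀ s ≥ 0, Monotone fun n : ℕ => y (s + n)) ∨
      (∀ s ≥ 0, Antitone fun n : ℕ => y (s + n)) := by
    rcases le_total (y 0) (y 1) with h01 | h10
    · left
      refine fun s => monotone_translates_of_le_comp_add_one ?_
      exact hcomp y _ dy _ hybd hybd₁ hy hy₁ (by simpa using h01)
    · right
      refine fun s => antitone_translates_of_comp_add_one_le ?_
      exact hcomp _ y _ dy hybd₁ hybd hy₁ hy (by simpa using h10)
  refine ⟨hmono, exists_periodic_limit_of_tendsto_translates fun s hs => ?_⟩
  refine exists_tendsto_of_monotone_or_antitone (m := 0) (M := ℓc) ?_ fun n => ?_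
  · exact hmono.imp (· s hs) (· s hs)
  · exact Ioc_subset_Icc_self (hybd _ (by positivity))

/-- Lemma 6.2: the translates of a bounded solution of the constrained ODE in a
periodic medium are monotone in n and converge to a 1-periodic profile. -/
theorem stmt_17 (ℓc : ℝ) (L : NNReal) (F : ℝ → ℝ → ℝ) (y dy : ℝ → ℝ)
    (hℓc : 0 < ℓc)
    (hFc : Continuous (Function.uncurry F))
    (hFlip : ∀ s, LipschitzWith L (F s))
    (hFper : ∀ s ℓ, F (s + 1) ℓ = F s ℓ)
    (hybd : ∀ s ≥ 0, y s ∈ Set.Ioc 0 ℓc)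
    (hy : ∀ s ≥ 0, HasDerivAt y (dy s) s ∧ max (dy s - F s (y s)) (y s - ℓc) = 0)
    (hcomp : ∀ (y₁ y₂ dy₁ dy₂ : ℝ → ℝ),
      (∀ s ≥ 0, y₁ s ∈ Set.Ioc 0 ℓc) → (∀ s ≥ 0, y₂ s ∈ Set.Ioc 0 ℓc) →
      (∀ s ≥ 0, HasDerivAt y₁ (dy₁ s) s ∧ max (dy₁ s - F s (y₁ s)) (y₁ s - ℓc) = 0) →
      (∀ s ≥ 0, HasDerivAt y₂ (dy₂ s) s ∧ max (dy₂ s - F s (y₂ s)) (y₂ s - ℓc) = 0) →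
      y₁ 0 ≤ y₂ 0 → ∀ s ≥ 0, y₁ s ≤ y₂ s) :
    ((∀ s ≥ 0, Monotone fun n : ℕ => y (s + n)) ∨
        (∀ s ≥ 0, Antitone fun n : ℕ => y (s + n))) ∧
      ∃ z : ℝ → ℝ, Function.Periodic z 1 ∧
        ∀ s ≥ 0, Filter.Tendsto (fun n : ℕ => y (s + n)) Filter.atTop (nhds (z s)) :=
  stmt_17_general ℓc F y dy hFper hybd hy hcomp
end

section
/- Let 𝓗 : ℝ → ℝ be Lipschitz and 1-periodic with 𝓗 ≥ η > 0, and let φ : ℝ → ℝ be continuous with φ(s) → 0 as s → ∞. Let b : [0, ∞) → ℝ solve b'(t) = 𝓗(b(t)) + φ(b(t)), with b' ≥ η/2 eventually, and define b_n(t) := b(t_n + t) - n where b(t_n) = n. Then (b_n) converges uniformly on compact time intervals to a function b_∞ solving b_∞' = 𝓗(b_∞), b_∞(0) = 0, and b_∞ satisfies b_∞(t + t₀) = b_∞(t) + 1 where t₀ is defined by b_∞(t₀) = 1. -/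
open Real Set Filter

/-!
The limit is found explicitly. For positive continuous `H` the autonomous equation `β' = H β`,
`β 0 = 0`, is solved by the inverse of the travel time `G x = ∫₀ˣ 1 / H`. When `H` is
`1`-periodic, `G (x + 1) = G x + G 1`, so `β (t + G 1) = β t + 1`.

The translate `b (t_n + ·) - n` has derivative `H (b (t_n + ·)) + φ (b (t_n + ·))`, which by
periodicity of `H` is `H` of the translate itself up to the error `φ (b (t_n + ·))`. Since `b`
is eventually nondecreasing, `b ≥ n` on `[t_n, ∞)` for large `n`, so this error tends to `0`
uniformly. The translate and `β` both start at `0`, so Grönwall's inequality bounds their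
distance on `[0, s]` by a constant (depending on `s` and the Lipschitz constant of `H`) times
the error.
-/

lemma gronwallBound_zero_eq_mul (K ε x : ℝ) :
    gronwallBound 0 K ε x = ε * gronwallBound 0 K 1 x := by
  unfold gronwallBound
  split_ifs <;> ring

lemma dist_le_mul_gronwallBound_of_approx_trajectory {E : Type*} [NormedAddCommGroup E]
    [NormedSpace ℝ E] {H : E → E} {C : NNReal} (hH : LipschitzWith C H) {x x' y : ℝ → E}
    {s δ : ℝ} (hδ : 0 ≤ δ) (hx : ∀ t ∈ Icc 0 s, HasDerivAt x (x' t) t)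
    (hx' : ∀ t ∈ Icc 0 s, dist (x' t) (H (x t)) ≤ δ)
    (hy : ∀ t ∈ Icc 0 s, HasDerivAt y (H (y t)) t) (h0 : x 0 = y 0) :
    ∀ t ∈ Icc 0 s, dist (x t) (y t) ≤ δ * gronwallBound 0 C 1 s := by
  have hgron := dist_le_of_approx_trajectories_ODE (v := fun _ => H) (fun _ => hH)
    (fun t ht => (hx t ht).continuousAt.continuousWithinAt)
    (fun t ht => (hx t (Ico_subset_Icc_self ht)).hasDerivWithinAt)
    (fun t ht => hx' t (Ico_subset_Icc_self ht))
    (fun t ht => (hy t ht).continuousAt.continuousWithinAt)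
    (fun t ht => (hy t (Ico_subset_Icc_self ht)).hasDerivWithinAt)
    (fun t _ => (dist_self _).le) (dist_le_zero.2 h0)
  intro t ht
  calc dist (x t) (y t) ≤ gronwallBound 0 C (δ + 0) (t - 0) := hgron t ht
    _ ≤ gronwallBound 0 C δ s := by
      rw [add_zero, sub_zero]
      exact gronwallBound_mono le_rfl hδ C.2 ht.2
    _ = δ * gronwallBound 0 C 1 s := gronwallBound_zero_eq_mul _ _ _

lemma Continuous.surjective_of_map_add_one {f : ℝ → ℝ} (hf : Continuous f) {c : ℝ}
    (hc : 0 < c) (hfc : ∀ x, f (x + 1) = f x + c) : Function.Surjective f := by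
  have hper : Function.Periodic (fun x => f x - c * x) 1 := fun x => by
    simp only [hfc]
    ring
  obtain ⟨K, hK⟩ := isBounded_iff_forall_norm_le.1
    (hper.isBounded_of_continuous one_ne_zero (by fun_prop))
  have hdev : ∀ x, |f x - c * x| ≤ K := fun x => hK _ (mem_range_self x)
  refine hf.surjective ?_ ?_
  · refine tendsto_atTop_mono (fun x => ?_)
      (tendsto_atTop_add_const_right _ (-K) (tendsto_id.const_mul_atTop hc))
    rw [id]
    linarith [(abs_le.1 (hdev x)).1]
  · refine tendsto_atBot_mono (fun x => ?_)
      (tendsto_atBot_add_const_right _ K (tendsto_id.const_mul_atBot hc))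
    rw [id]
    linarith [(abs_le.1 (hdev x)).2]

/-- The time the solution of `x' = H x` needs to travel from `0` to `x`. -/
noncomputable def travelTime (H : ℝ → ℝ) (x : ℝ) : ℝ :=
  ∫ u in (0 : ℝ)..x, (H u)⁻¹

section TravelTime

variable {H : ℝ → ℝ}

lemma travelTime_zero (H : ℝ → ℝ) : travelTime H 0 = 0 :=
  intervalIntegral.integral_same

lemma hasDerivAt_travelTime (hHc : Continuous H) (hH0 : ∀ x, H x ≠ 0) (x : ℝ) :
    HasDerivAt (travelTime H) (H x)⁻¹ x :=
  ((hHc.inv₀ hH0).integral_hasStrictDerivAt 0 x).hasDerivAt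

lemma continuous_travelTime (hHc : Continuous H) (hH0 : ∀ x, H x ≠ 0) :
    Continuous (travelTime H) :=
  continuous_iff_continuousAt.2 fun x => (hasDerivAt_travelTime hHc hH0 x).continuousAt

lemma strictMono_travelTime (hHc : Continuous H) (hHpos : ∀ x, 0 < H x) :
    StrictMono (travelTime H) :=
  strictMono_of_hasDerivAt_pos (hasDerivAt_travelTime hHc fun x => (hHpos x).ne')
    fun x => inv_pos.2 (hHpos x)

lemma travelTime_one_pos (hHc : Continuous H) (hHpos : ∀ x, 0 < H x) :
    0 < travelTime H 1 := by
  simpa [travelTime_zero] using strictMono_travelTime hHc hHpos zero_lt_one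

lemma travelTime_add_one (hHc : Continuous H) (hH0 : ∀ x, H x ≠ 0)
    (hHper : Function.Periodic H 1) (x : ℝ) :
    travelTime H (x + 1) = travelTime H x + travelTime H 1 := by
  have hint : ∀ a b : ℝ, IntervalIntegrable (fun u => (H u)⁻¹) MeasureTheory.volume a b :=
    fun a b => (hHc.inv₀ hH0).intervalIntegrable a b
  have hinvper : Function.Periodic (fun u => (H u)⁻¹) 1 := fun u => by simp only [hHper u]
  unfold travelTime
  rw [← intervalIntegral.integral_add_adjacent_intervals (hint 0 x) (hint x (x + 1)),
    hinvper.intervalIntegral_add_eq x 0, zero_add]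

theorem exists_pulsating_solution (hHc : Continuous H) (hHpos : ∀ x, 0 < H x)
    (hHper : Function.Periodic H 1) :
    ∃ β : ℝ → ℝ, β 0 = 0 ∧ (∀ t, HasDerivAt β (H (β t)) t) ∧
      ∀ t, β (t + travelTime H 1) = β t + 1 := by
  have hH0 : ∀ x, H x ≠ 0 := fun x => (hHpos x).ne'
  have hmono := strictMono_travelTime hHc hHpos
  have hadd := travelTime_add_one hHc hH0 hHper
  let G : ℝ ≃o ℝ := hmono.orderIsoOfSurjective _
    ((continuous_travelTime hHc hH0).surjective_of_map_add_one
      (travelTime_one_pos hHc hHpos) hadd)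
  refine ⟨G.symm, ?_, fun t => ?_, fun t => ?_⟩
  · rw [OrderIso.symm_apply_eq]
    exact (travelTime_zero H).symm
  · simpa using HasDerivAt.of_local_left_inverse G.symm.continuous.continuousAt
      (hasDerivAt_travelTime hHc hH0 (G.symm t)) (inv_ne_zero (hH0 _))
      (Eventually.of_forall G.apply_symm_apply)
  · rw [OrderIso.symm_apply_eq]
    change _ = travelTime H _
    rw [hadd]
    exact congrArg (· + travelTime H 1) (G.apply_symm_apply t).symm

end TravelTime

lemma eventually_le_of_apply_eq_natCast {b : ℝ → ℝ} {T : ℝ} (hb : ContinuousOn b (Icc 0 T))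
    {tseq : ℕ → ℝ} (htseq : ∀ n : ℕ, 0 ≤ tseq n ∧ b (tseq n) = n) :
    ∀ᶠ n in atTop, T ≤ tseq n := by
  obtain ⟨M, hM⟩ := isCompact_Icc.bddAbove_image hb
  filter_upwards [eventually_gt_atTop ⌈M⌉₊] with n hn
  by_contra! hlt
  have hbM : b (tseq n) ≤ M := hM (mem_image_of_mem b ⟨(htseq n).1, hlt.le⟩)
  rw [(htseq n).2] at hbM
  exact absurd (Nat.lt_of_ceil_lt hn) hbM.not_gt

theorem tendstoUniformlyOn_shift_sub_natCast {H φ b β : ℝ → ℝ} {C : NNReal} {T : ℝ}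
    {tseq : ℕ → ℝ} (hH : LipschitzWith C H) (hHper : Function.Periodic H 1)
    (hφ : Tendsto φ atTop (nhds 0)) (hb : ∀ t ≥ 0, HasDerivAt b (H (b t) + φ (b t)) t)
    (hbmono : MonotoneOn b (Ici T)) (hβ0 : β 0 = 0) (hβ : ∀ t, HasDerivAt β (H (β t)) t)
    (htseq : ∀ n : ℕ, 0 ≤ tseq n ∧ b (tseq n) = n) (s : ℝ) :
    TendstoUniformlyOn (fun (n : ℕ) τ => b (tseq n + τ) - n) β atTop (Icc 0 s) := by
  rw [Metric.tendstoUniformlyOn_iff]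
  intro ε hε
  set A := gronwallBound 0 C 1 s
  set δ := ε / (|A| + 1)
  have hδ : 0 < δ := by positivity
  have hδA : δ * A < ε := by
    calc δ * A ≤ δ * |A| := mul_le_mul_of_nonneg_left (le_abs_self A) hδ.le
      _ < δ * (|A| + 1) := by gcongr; linarith
      _ = ε := div_mul_cancel₀ ε (by positivity)
  obtain ⟨B, hB⟩ := eventually_atTop.1 (hφ.eventually (Metric.ball_mem_nhds 0 hδ))
  filter_upwards [eventually_le_of_apply_eq_natCast
      (fun t ht => (hb t ht.1).continuousAt.continuousWithinAt) htseq,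
    eventually_ge_atTop ⌈B⌉₊] with n hnT hnB τ hτ
  have hshift0 : ∀ σ ∈ Icc 0 s, 0 ≤ tseq n + σ := fun σ hσ => add_nonneg (htseq n).1 hσ.1
  have hφsmall : ∀ σ ∈ Icc 0 s, |φ (b (tseq n + σ))| ≤ δ := by
    intro σ hσ
    have hnb : (n : ℝ) ≤ b (tseq n + σ) := (htseq n).2 ▸
      hbmono hnT (hnT.trans (le_add_of_nonneg_right hσ.1)) (le_add_of_nonneg_right hσ.1)
    simpa [Real.dist_eq] using (hB _ ((Nat.ceil_le.1 hnB).trans hnb)).le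
  have hHn : ∀ y, H (y - n) = H y := fun y => by simpa using hHper.sub_nat_mul_eq (x := y) n
  have hclose := dist_le_mul_gronwallBound_of_approx_trajectory hH hδ.le
    (x := fun σ => b (tseq n + σ) - n) (y := β)
    (fun σ hσ => by
      simpa using ((hb _ (hshift0 σ hσ)).comp σ ((hasDerivAt_id σ).const_add _)).sub_const
        (n : ℝ))
    (fun σ hσ => by
      simpa [Real.dist_eq, hHn] using hφsmall σ hσ)
    (fun σ _ => hβ σ) (by simp [hβ0, (htseq n).2])
  rw [dist_comm]
  exact (hclose τ hτ).trans_lt hδA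

theorem stmt_18_general (C : NNReal) (η : ℝ) (Hfun φ b : ℝ → ℝ) (tseq : ℕ → ℝ)
    (hη : 0 < η) (hH : LipschitzWith C Hfun) (hHper : Function.Periodic Hfun 1)
    (hHpos : ∀ s, η ≤ Hfun s)
    (hφ0 : Filter.Tendsto φ Filter.atTop (nhds 0))
    (hb : ∀ t ≥ 0, HasDerivAt b (Hfun (b t) + φ (b t)) t)
    (hb' : ∃ T ≥ 0, ∀ t ≥ T, η / 2 ≤ Hfun (b t) + φ (b t))
    (htseq : ∀ n : ℕ, 0 ≤ tseq n ∧ b (tseq n) = n) :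
    ∃ binf : ℝ → ℝ, binf 0 = 0 ∧ (∀ t ≥ 0, HasDerivAt binf (Hfun (binf t)) t) ∧
      (∀ s > 0, TendstoUniformlyOn (fun (n : ℕ) (τ : ℝ) => b (tseq n + τ) - n) binf
        Filter.atTop (Set.Icc 0 s)) ∧
      ∃ t₀ > 0, binf t₀ = 1 ∧ ∀ τ ≥ 0, binf (τ + t₀) = binf τ + 1 := by
  obtain ⟨T, hT0, hbT⟩ := hb'
  have hHpos' : ∀ x, 0 < Hfun x := fun x => hη.trans_le (hHpos x)
  obtain ⟨β, hβ0, hβ, hβper⟩ := exists_pulsating_solution hH.continuous hHpos' hHper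
  have hbmono : MonotoneOn b (Ici T) := by
    refine monotoneOn_of_hasDerivWithinAt_nonneg (convex_Ici T)
      (fun t ht => (hb t (hT0.trans ht)).continuousAt.continuousWithinAt)
      (fun t ht => (hb t (hT0.trans (interior_subset ht))).hasDerivWithinAt)
      (fun t ht => ?_)
    exact (half_pos hη).le.trans (hbT t (interior_subset ht))
  refine ⟨β, hβ0, fun t _ => hβ t, fun s _ => ?_, travelTime Hfun 1,
    travelTime_one_pos hH.continuous hHpos', by simpa [hβ0] using hβper 0,
    fun τ _ => hβper τ⟩
  exact tendstoUniformlyOn_shift_sub_natCast hH hHper hφ0 hb hbmono hβ0 hβ htseq s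

/-- Convergence to the pulsating traveling wave: the translates b(t_n + ·) - n converge
uniformly on compact time intervals to a solution of b' = Hfun(b) which is space-time
periodic. -/
theorem stmt_18 (C : NNReal) (η : ℝ) (Hfun φ b : ℝ → ℝ) (tseq : ℕ → ℝ)
    (hη : 0 < η) (hH : LipschitzWith C Hfun) (hHper : Function.Periodic Hfun 1)
    (hHpos : ∀ s, η ≤ Hfun s)
    (hφc : Continuous φ) (hφ0 : Filter.Tendsto φ Filter.atTop (nhds 0))
    (hb : ∀ t ≥ 0, HasDerivAt b (Hfun (b t) + φ (b t)) t)
    (hb' : ∃ T ≥ 0, ∀ t ≥ T, η / 2 ≤ Hfun (b t) + φ (b t))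
    (htseq : ∀ n : ℕ, 0 ≤ tseq n ∧ b (tseq n) = n) :
    ∃ binf : ℝ → ℝ, binf 0 = 0 ∧ (∀ t ≥ 0, HasDerivAt binf (Hfun (binf t)) t) ∧
      (∀ s > 0, TendstoUniformlyOn (fun (n : ℕ) (τ : ℝ) => b (tseq n + τ) - n) binf
        Filter.atTop (Set.Icc 0 s)) ∧
      ∃ t₀ > 0, binf t₀ = 1 ∧ ∀ τ ≥ 0, binf (τ + t₀) = binf τ + 1 :=
  stmt_18_general C η Hfun φ b tseq hη hH hHper hHpos hφ0 hb hb' htseq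
end
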